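/- arXiv:1602.01108 — 10 statements merged into one kernel-verified Lean document; each statement's English description precedes it below -/
import Mathlib

section
/- Let ρ = Σ_j p_j P_j where the P_j are pairwise orthogonal Hermitian projections (P_j² = P_j, P_j† = P_j, P_j P_k = 0 for j ≠ k) and p_j are nonnegative reals, and let L be a linear map on matrices satisfying detailed balance with respect to ρ. Then for all indices i, j and all real t, the classical detailed-balance relation holds: p_j · tr(P_j · exp(tL)(P_i)) = p_i · tr(P_i · exp(tL)(P_j)). -/
open Matrix
open scoped ComplexOrder

/-- The exponential `exp (t • L)` of the linear map `t • L` on matrices, applied to a matrix `A`;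
it is given by the usual exponential power series `∑ (t • L)^k A / k!`. -/
noncomputable def expSemigroup {n : Type*} [Fintype n] [DecidableEq n]
    (L : Module.End ℂ (Matrix n n ℂ)) (t : ℝ) (A : Matrix n n ℂ) : Matrix n n ℂ :=
  ∑' k : ℕ, (k.factorial : ℂ)⁻¹ • (((t : ℂ) • L) ^ k) A

/-!
Detailed balance of `L` is symmetry of `L` for the bilinear form `(A, B) ↦ tr(ρ A B)`. Symmetry
passes to the powers of `t • L` and, the form being continuous, to the exponential series
`exp(tL)`. Since the `P j` are orthogonal idempotents, `P j ρ = p j P j = ρ P j`, so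
`p j · tr(P j exp(tL)(P i)) = tr(ρ exp(tL)(P i) P j) = tr(ρ P i exp(tL)(P j))`
`= p i · tr(P i exp(tL)(P j))`.
-/

theorem HasSum.matrix_trace {X R n : Type*} [Fintype n] [AddCommMonoid R] [TopologicalSpace R]
    [ContinuousAdd R] {f : X → Matrix n n R} {a : Matrix n n R} (hf : HasSum f a) :
    HasSum (fun x => (f x).trace) a.trace :=
  hf.map (traceAddMonoidHom n R) continuous_id.matrix_trace

theorem Module.End.summable_expSeries_apply {𝕜 E : Type*} [RCLike 𝕜] [NormedAddCommGroup E]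
    [NormedSpace 𝕜 E] [FiniteDimensional 𝕜 E] (f : Module.End 𝕜 E) (x : E) :
    Summable fun k : ℕ => (k.factorial⁻¹ : 𝕜) • (f ^ k) x := by
  have := FiniteDimensional.complete 𝕜 E
  have hpow : ∀ k, ⇑(LinearMap.toContinuousLinearMap f ^ k) = ⇑(f ^ k) := fun k => by
    rw [FunLike.coe_pow_eq_iterate, Module.End.coe_pow, LinearMap.coe_toContinuousLinearMap']
  simpa only [Function.comp_def, ContinuousLinearMap.apply_apply, _root_.smul_apply, hpow] using
    (NormedSpace.expSeries_summable' (𝕂 := 𝕜) (LinearMap.toContinuousLinearMap f)).mapL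
      (ContinuousLinearMap.apply 𝕜 E x)

section Projections

variable {ι R A : Type*} [Fintype ι] [CommSemiring R] [Semiring A] [Algebra R A]
  {P : ι → A} (hproj : ∀ j, P j * P j = P j) (horth : ∀ j k, j ≠ k → P j * P k = 0)
include hproj horth

theorem mul_sum_smul_of_orthogonal_idempotents (c : ι → R) (k : ι) :
    P k * ∑ j, c j • P j = c k • P k := by
  rw [Finset.mul_sum, Finset.sum_eq_single_of_mem k (Finset.mem_univ k), mul_smul_comm, hproj]
  intro j _ hjk
  rw [mul_smul_comm, horth k j (Ne.symm hjk), smul_zero]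

theorem sum_smul_mul_of_orthogonal_idempotents (c : ι → R) (k : ι) :
    (∑ j, c j • P j) * P k = c k • P k := by
  rw [Finset.sum_mul, Finset.sum_eq_single_of_mem k (Finset.mem_univ k), smul_mul_assoc, hproj]
  intro j _ hjk
  rw [smul_mul_assoc, horth j k hjk, smul_zero]

end Projections

namespace Matrix

variable {n R : Type*} [Fintype n]

def IsDetailedBalance [CommSemiring R] (ρ : Matrix n n R) (f : Matrix n n R → Matrix n n R) :
    Prop :=
  ∀ A B, (ρ * f A * B).trace = (ρ * A * f B).trace

namespace IsDetailedBalance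

variable [CommSemiring R] {ρ : Matrix n n R} {f : Module.End R (Matrix n n R)}

theorem smul (hf : IsDetailedBalance ρ f) (c : R) : IsDetailedBalance ρ ⇑(c • f) := by
  intro A B
  simp only [LinearMap.smul_apply, Matrix.mul_smul, Matrix.smul_mul, trace_smul, hf A B]

theorem pow (hf : IsDetailedBalance ρ f) (k : ℕ) : IsDetailedBalance ρ ⇑(f ^ k) := by
  induction k with
  | zero => intro A B; rfl
  | succ k ih =>
    intro A B
    conv_lhs => rw [pow_succ, Module.End.mul_apply]
    conv_rhs => rw [pow_succ', Module.End.mul_apply]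
    exact (ih _ _).trans (hf _ _)

end IsDetailedBalance

end Matrix

section Exponential

variable {n : Type*} [Fintype n] [DecidableEq n]

-- Any norm will do: it induces the product topology, which is the one `expSemigroup` sums in.
attribute [local instance] Matrix.normedAddCommGroup Matrix.normedSpace in
theorem hasSum_expSemigroup (L : Module.End ℂ (Matrix n n ℂ)) (t : ℝ) (A : Matrix n n ℂ) :
    HasSum (fun k : ℕ => (k.factorial : ℂ)⁻¹ • (((t : ℂ) • L) ^ k) A) (expSemigroup L t A) :=
  (Module.End.summable_expSeries_apply _ A).hasSum

theorem Matrix.IsDetailedBalance.expSemigroup {ρ : Matrix n n ℂ} {L : Module.End ℂ (Matrix n n ℂ)}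
    (hL : IsDetailedBalance ρ L) (t : ℝ) : IsDetailedBalance ρ (expSemigroup L t) := by
  intro A B
  have hA := (((hasSum_expSemigroup L t A).mul_left ρ).mul_right B).matrix_trace
  have hB := ((hasSum_expSemigroup L t B).mul_left (ρ * A)).matrix_trace
  refine hA.unique (hB.congr_fun fun k => ?_)
  exact ((hL.smul (t : ℂ)).pow k).smul (k.factorial : ℂ)⁻¹ A B

end Exponential

theorem classical_detailed_balance_of_detailed_balance_general
    {n : Type*} [Fintype n] [DecidableEq n]
    {ι : Type*} [Fintype ι]
    (p : ι → ℝ)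
    (P : ι → Matrix n n ℂ)
    (hproj : ∀ j, P j * P j = P j)
    (horth : ∀ j k, j ≠ k → P j * P k = 0)
    (ρ : Matrix n n ℂ) (hρ : ρ = ∑ j, (p j : ℂ) • P j)
    (L : Module.End ℂ (Matrix n n ℂ))
    (hdb : ∀ A B : Matrix n n ℂ, (ρ * L A * B).trace = (ρ * A * L B).trace) :
    ∀ (i j : ι) (t : ℝ),
      (p j : ℂ) * (P j * expSemigroup L t (P i)).trace
        = (p i : ℂ) * (P i * expSemigroup L t (P j)).trace := by
  intro i j t
  have hPρ : P j * ρ = (p j : ℂ) • P j :=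
    hρ ▸ mul_sum_smul_of_orthogonal_idempotents hproj horth _ j
  have hρP : ρ * P i = (p i : ℂ) • P i :=
    hρ ▸ sum_smul_mul_of_orthogonal_idempotents hproj horth _ i
  calc (p j : ℂ) * (P j * expSemigroup L t (P i)).trace
      = (P j * ρ * expSemigroup L t (P i)).trace := by rw [hPρ, smul_mul, trace_smul, smul_eq_mul]
    _ = (ρ * expSemigroup L t (P i) * P j).trace := by
        rw [Matrix.mul_assoc, trace_mul_comm, Matrix.mul_assoc]
    _ = (ρ * P i * expSemigroup L t (P j)).trace := IsDetailedBalance.expSemigroup hdb t _ _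
    _ = (p i : ℂ) * (P i * expSemigroup L t (P j)).trace := by
        rw [hρP, smul_mul, trace_smul, smul_eq_mul]

/-- If `ρ = ∑ j, p j • P j` with `P j` pairwise orthogonal Hermitian projections and `p j ≥ 0`,
and `L` satisfies detailed balance with respect to `ρ`, then the classical detailed-balance
relation `p j · tr(P j · exp(tL)(P i)) = p i · tr(P i · exp(tL)(P j))` holds. -/
theorem classical_detailed_balance_of_detailed_balance
    {n : Type*} [Fintype n] [DecidableEq n] [Nonempty n]
    {ι : Type*} [Fintype ι]
    (p : ι → ℝ) (hp : ∀ j, 0 ≤ p j)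
    (P : ι → Matrix n n ℂ)
    (hproj : ∀ j, P j * P j = P j)
    (hherm : ∀ j, (P j)ᴴ = P j)
    (horth : ∀ j k, j ≠ k → P j * P k = 0)
    (ρ : Matrix n n ℂ) (hρ : ρ = ∑ j, (p j : ℂ) • P j)
    (L : Module.End ℂ (Matrix n n ℂ))
    (hdb : ∀ A B : Matrix n n ℂ, (ρ * L A * B).trace = (ρ * A * L B).trace) :
    ∀ (i j : ι) (t : ℝ),
      (p j : ℂ) * (P j * expSemigroup L t (P i)).trace
        = (p i : ℂ) * (P i * expSemigroup L t (P j)).trace :=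
  classical_detailed_balance_of_detailed_balance_general p P hproj horth ρ hρ L hdb
end

section
/- Let H be a Hermitian matrix, {P_j} a finite family of pairwise orthogonal Hermitian projections with Σ_j P_j = 1 and H·P_j = E_j·P_j with E_j real, let β be real, and set ρ := exp(−βH)/tr(exp(−βH)) (the Gibbs state). If a linear map L on matrices satisfies detailed balance with respect to ρ, then for all indices i, j and all real t: exp(−β·E_j) · tr(P_j · exp(tL)(P_i)) = exp(−β·E_i) · tr(P_i · exp(tL)(P_j)). -/
/-!
Detailed balance says that `L` is symmetric for the bilinear form `(A, B) ↦ tr(ρ A B)`. The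
symmetry passes to the powers of `t • L` and, by continuity of the form, to the series
`exp (t • L)`. Taking the conjugate transpose of `H P_k = E_k P_k` gives `P_k H = E_k P_k`, so `ρ`
acts on `P_k` from either side as the scalar `exp(−βE_k) / Z` with `Z = tr(exp(−βH))`. Inserting
`A = P_i`, `B = P_j` into the symmetry of `exp (t • L)` and cycling the trace gives the claim up to
the factor `1 / Z`, which is nonzero since `Z = tr(B^* B)` for the invertible `B = exp(−βH/2)`.
-/

open Matrix

namespace NormedSpace

variable {𝔸 : Type*} [NormedRing 𝔸] [NormedAlgebra ℂ 𝔸] [CompleteSpace 𝔸]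

theorem exp_mul_of_mul_eq_smul {A P : 𝔸} {c : ℂ} (h : A * P = c • P) :
    exp A * P = Complex.exp c • P := by
  let : NormedAlgebra ℚ 𝔸 := NormedAlgebra.restrictScalars ℚ ℂ 𝔸
  have hc : SemiconjBy P (algebraMap ℂ 𝔸 c) A := by
    rw [SemiconjBy, ← Algebra.commutes, ← Algebra.smul_def, h]
  rw [← hc.exp_right, ← algebraMap_exp_comm, ← Algebra.commutes, ← Algebra.smul_def,
    Complex.exp_eq_exp_ℂ]

theorem mul_exp_of_mul_eq_smul {A P : 𝔸} {c : ℂ} (h : P * A = c • P) :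
    P * exp A = Complex.exp c • P := by
  let : NormedAlgebra ℚ 𝔸 := NormedAlgebra.restrictScalars ℚ ℂ 𝔸
  have hc : SemiconjBy P A (algebraMap ℂ 𝔸 c) := by
    rw [SemiconjBy, ← Algebra.smul_def, h]
  rw [hc.exp_right, ← algebraMap_exp_comm, ← Algebra.smul_def, Complex.exp_eq_exp_ℂ]

end NormedSpace

theorem Module.End.summable_inv_factorial_smul_pow_apply {V : Type*} [NormedAddCommGroup V]
    [NormedSpace ℂ V] [FiniteDimensional ℂ V] (T : Module.End ℂ V) (v : V) :
    Summable fun k : ℕ => (k.factorial : ℂ)⁻¹ • (T ^ k) v := by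
  have := (NormedSpace.expSeries_summable' (𝕂 := ℂ) (LinearMap.toContinuousLinearMap T)).mapL
    (ContinuousLinearMap.apply ℂ V v)
  simpa [FunLike.coe_pow_eq_iterate, Module.End.coe_pow] using this

theorem summable_expSemigroup {n : Type*} [Fintype n] [DecidableEq n]
    (L : Module.End ℂ (Matrix n n ℂ)) (t : ℝ) (A : Matrix n n ℂ) :
    Summable fun k : ℕ => (k.factorial : ℂ)⁻¹ • (((t : ℂ) • L) ^ k) A :=
  open scoped Norms.Operator in Module.End.summable_inv_factorial_smul_pow_apply _ A

namespace Matrix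

variable {n : Type*} [Fintype n]

section Exp

variable [DecidableEq n]

theorem exp_mul_of_mul_eq_smul {A P : Matrix n n ℂ} {c : ℂ} (h : A * P = c • P) :
    NormedSpace.exp A * P = Complex.exp c • P :=
  open scoped Norms.Operator in NormedSpace.exp_mul_of_mul_eq_smul h

theorem mul_exp_of_mul_eq_smul {A P : Matrix n n ℂ} {c : ℂ} (h : P * A = c • P) :
    P * NormedSpace.exp A = Complex.exp c • P :=
  open scoped Norms.Operator in NormedSpace.mul_exp_of_mul_eq_smul h

open scoped ComplexOrder in
theorem IsHermitian.trace_exp_ne_zero [Nonempty n] {K : Matrix n n ℂ} (hK : K.IsHermitian) :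
    (NormedSpace.exp K).trace ≠ 0 := by
  set B := NormedSpace.exp ((2⁻¹ : ℝ) • K)
  have hB : Bᴴ * B = NormedSpace.exp K := by
    rw [(hK.smul (IsSelfAdjoint.all _)).exp, ← exp_add_of_commute _ _ (Commute.refl _), ← add_smul]
    norm_num
  rw [← hB, Ne, trace_conjTranspose_mul_self_eq_zero_iff]
  exact (isUnit_exp _).ne_zero

end Exp

def IsDetailedBalanced {R : Type*} [Mul R] [AddCommMonoid R] (ρ : Matrix n n R)
    (T : Matrix n n R → Matrix n n R) : Prop :=
  ∀ A B, (ρ * T A * B).trace = (ρ * A * T B).trace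

namespace IsDetailedBalanced

variable {R : Type*} [CommSemiring R] {ρ : Matrix n n R} {T : Matrix n n R → Matrix n n R}

theorem iterate (hT : IsDetailedBalanced ρ T) (k : ℕ) : IsDetailedBalanced ρ T^[k] := by
  induction k with
  | zero => intro A B; rfl
  | succ k ih =>
    intro A B
    rw [Function.iterate_succ_apply', hT, ih, Function.iterate_succ_apply]

theorem const_smul (hT : IsDetailedBalanced ρ T) (c : R) : IsDetailedBalanced ρ (c • T) := by
  intro A B
  simp only [Pi.smul_apply, Matrix.mul_smul, Matrix.smul_mul, trace_smul, hT A B]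

theorem tsum [TopologicalSpace R] [IsTopologicalSemiring R] [T2Space R]
    {T : ℕ → Matrix n n R → Matrix n n R} (hT : ∀ k, IsDetailedBalanced ρ (T k))
    (hs : ∀ A, Summable fun k => T k A) : IsDetailedBalanced ρ fun A => ∑' k, T k A := by
  intro A B
  let left : Matrix n n R →ₗ[R] R :=
    traceLinearMap n R R ∘ₗ LinearMap.mulRight R B ∘ₗ LinearMap.mulLeft R ρ
  let right : Matrix n n R →ₗ[R] R := traceLinearMap n R R ∘ₗ LinearMap.mulLeft R (ρ * A)
  have hl : HasSum (fun k => (ρ * T k A * B).trace) (ρ * (∑' k, T k A) * B).trace :=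
    (hs A).hasSum.map left (show Continuous fun X => (ρ * X * B).trace by fun_prop)
  have hr : HasSum (fun k => (ρ * A * T k B).trace) (ρ * A * ∑' k, T k B).trace :=
    (hs B).hasSum.map right (show Continuous fun X => (ρ * A * X).trace by fun_prop)
  simp only [hT _ A B] at hl
  exact hl.unique hr

theorem expSemigroup [DecidableEq n] {ρ : Matrix n n ℂ} {L : Module.End ℂ (Matrix n n ℂ)}
    (hL : IsDetailedBalanced ρ L) (t : ℝ) : IsDetailedBalanced ρ (expSemigroup L t) := by
  refine tsum (fun k => ?_) (summable_expSemigroup L t)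
  rw [Module.End.coe_pow, LinearMap.coe_smul]
  exact ((hL.const_smul _).iterate k).const_smul _

theorem trace_mul_eq {P Q : Matrix n n R} {a b : R} (hT : IsDetailedBalanced ρ T)
    (hP : ρ * P = a • P) (hQ : Q * ρ = b • Q) :
    b * (Q * T P).trace = a * (P * T Q).trace := by
  have := hT P Q
  rwa [trace_mul_cycle, hQ, hP, smul_mul, smul_mul, trace_smul, trace_smul] at this

end IsDetailedBalanced

end Matrix

theorem gibbs_detailed_balance_general
    {n : Type*} [Fintype n] [DecidableEq n] [Nonempty n]
    {ι : Type*}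
    (H : Matrix n n ℂ) (hH : Hᴴ = H)
    (P : ι → Matrix n n ℂ) (E : ι → ℝ)
    (hherm : ∀ j, (P j)ᴴ = P j)
    (heig : ∀ j, H * P j = (E j : ℂ) • P j)
    (β : ℝ)
    (ρ : Matrix n n ℂ)
    (hρ : ρ = ((NormedSpace.exp (-(β : ℂ) • H)).trace)⁻¹ • NormedSpace.exp (-(β : ℂ) • H))
    (L : Module.End ℂ (Matrix n n ℂ))
    (hdb : ∀ A B : Matrix n n ℂ, (ρ * L A * B).trace = (ρ * A * L B).trace) :
    ∀ (i j : ι) (t : ℝ),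
      (Real.exp (-(β * E j)) : ℂ) * (P j * expSemigroup L t (P i)).trace
        = (Real.exp (-(β * E i)) : ℂ) * (P i * expSemigroup L t (P j)).trace := by
  intro i j t
  set Z := (NormedSpace.exp (-(β : ℂ) • H)).trace
  have hZ : Z ≠ 0 :=
    (IsHermitian.smul hH (IsSelfAdjoint.neg (Complex.conj_ofReal β))).trace_exp_ne_zero
  have hHP (k : ι) : -(β : ℂ) • H * P k = ((-(β * E k) : ℝ) : ℂ) • P k := by
    rw [Matrix.smul_mul, heig, smul_smul]
    push_cast
    ring_nf
  have hPH (k : ι) : P k * (-(β : ℂ) • H) = ((-(β * E k) : ℝ) : ℂ) • P k := by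
    simpa [hH, hherm] using congrArg conjTranspose (hHP k)
  have hρP (k : ι) : ρ * P k = (Z⁻¹ * Real.exp (-(β * E k))) • P k := by
    rw [hρ, Matrix.smul_mul, exp_mul_of_mul_eq_smul (hHP k), ← Complex.ofReal_exp, smul_smul]
  have hPρ (k : ι) : P k * ρ = (Z⁻¹ * Real.exp (-(β * E k))) • P k := by
    rw [hρ, Matrix.mul_smul, mul_exp_of_mul_eq_smul (hPH k), ← Complex.ofReal_exp, smul_smul]
  have key := (IsDetailedBalanced.expSemigroup hdb t).trace_mul_eq (hρP i) (hPρ j)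
  rw [mul_assoc, mul_assoc] at key
  exact mul_left_cancel₀ (inv_ne_zero hZ) key

/-- For the Gibbs state `ρ = exp(−βH)/tr(exp(−βH))` of a Hermitian Hamiltonian `H` with
spectral projections `P j` and eigenvalues `E j`, detailed balance of a linear map `L` with
respect to `ρ` implies the classical Gibbs detailed-balance relation
`exp(−βE_j)·tr(P j · exp(tL)(P i)) = exp(−βE_i)·tr(P i · exp(tL)(P j))`. -/
theorem gibbs_detailed_balance
    {n : Type*} [Fintype n] [DecidableEq n] [Nonempty n]
    {ι : Type*} [Fintype ι]
    (H : Matrix n n ℂ) (hH : Hᴴ = H)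
    (P : ι → Matrix n n ℂ) (E : ι → ℝ)
    (hproj : ∀ j, P j * P j = P j)
    (hherm : ∀ j, (P j)ᴴ = P j)
    (horth : ∀ j k, j ≠ k → P j * P k = 0)
    (hsum : ∑ j, P j = 1)
    (heig : ∀ j, H * P j = (E j : ℂ) • P j)
    (β : ℝ)
    (ρ : Matrix n n ℂ)
    (hρ : ρ = ((NormedSpace.exp (-(β : ℂ) • H)).trace)⁻¹ • NormedSpace.exp (-(β : ℂ) • H))
    (L : Module.End ℂ (Matrix n n ℂ))
    (hdb : ∀ A B : Matrix n n ℂ, (ρ * L A * B).trace = (ρ * A * L B).trace) :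
    ∀ (i j : ι) (t : ℝ),
      (Real.exp (-(β * E j)) : ℂ) * (P j * expSemigroup L t (P i)).trace
        = (Real.exp (-(β * E i)) : ℂ) * (P i * expSemigroup L t (P j)).trace :=
  gibbs_detailed_balance_general H hH P E hherm heig β ρ hρ L hdb
end

section
/- Let ρ be a density matrix, U a unitary with U·ρ·U† = ρ, and O a Hermitian matrix with U·O·U† = −O. Assume tr(ρ·O²) ≥ (μ·o·N)² where μ, o, N > 0 are reals. Define the symmetry-breaking perturbation operators Õ^± := (1 ± O/√(tr(ρ·O²)))/√2. Then tr(ρ · Õ^± · O · Õ^±) = ±√(tr(ρ·O²)); in particular |tr(ρ · Õ^± · O · Õ^±)| ≥ μ·o·N, so the states defined by Õ^± break the symmetry with an extensive value of the order parameter. -/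
open Matrix
open scoped ComplexOrder

/-!
Conjugation by `U` fixes `ρ` and negates `O`, hence negates every odd power of `O`; since the
trace is invariant under unitary conjugation, all odd moments `tr(ρ O^k)` vanish. Expanding
`tr(ρ Õ O Õ)` for `Õ = (1 + εO)/√2` therefore leaves only the cross term `ε tr(ρ O²)`, which for
`ε = ±1/√tr(ρO²)` equals `±√tr(ρO²)`.
-/

namespace Matrix

variable {n R : Type*} [Fintype n] [DecidableEq n] [CommRing R]

theorem trace_mul_smul_one_add_smul_mul_mul_smul_one_add_smul (ρ A : Matrix n n R) (c ε : R) :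
    (ρ * (c • (1 + ε • A)) * A * (c • (1 + ε • A))).trace =
      c ^ 2 * ((ρ * A).trace + 2 * ε * (ρ * A ^ 2).trace + ε ^ 2 * (ρ * A ^ 3).trace) := by
  simp only [pow_succ, pow_zero, Matrix.smul_mul, Matrix.mul_smul, Matrix.mul_add,
    Matrix.add_mul, Matrix.mul_one, Matrix.one_mul, trace_smul, trace_add, smul_eq_mul,
    Matrix.mul_assoc]
  ring

variable [StarRing R] {U : Matrix n n R}

theorem unitary_mul_pow_mul_conjTranspose (hU : U ∈ unitaryGroup n R) (A : Matrix n n R)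
    (k : ℕ) : U * A ^ k * Uᴴ = (U * A * Uᴴ) ^ k := by
  simpa [star_eq_conjTranspose] using map_pow (Unitary.conjStarAlgAut R _ ⟨U, hU⟩) A k

theorem trace_unitary_mul_mul_conjTranspose (hU : U ∈ unitaryGroup n R) (A : Matrix n n R) :
    (U * A * Uᴴ).trace = A.trace := by
  rw [trace_mul_cycle, ← star_eq_conjTranspose, Unitary.star_mul_self_of_mem hU, one_mul]

theorem trace_mul_eq_zero_of_unitary_conj_eq_neg [IsAddTorsionFree R] {ρ A : Matrix n n R}
    (hU : U ∈ unitaryGroup n R) (hρ : U * ρ * Uᴴ = ρ) (hA : U * A * Uᴴ = -A) :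
    (ρ * A).trace = 0 := by
  have hUU : Uᴴ * U = 1 := by
    rw [← star_eq_conjTranspose]
    exact Unitary.star_mul_self_of_mem hU
  rw [← self_eq_neg]
  calc (ρ * A).trace = (U * (ρ * A) * Uᴴ).trace :=
        (trace_unitary_mul_mul_conjTranspose hU _).symm
    _ = ((U * ρ * Uᴴ) * (U * A * Uᴴ)).trace := by
        simp only [Matrix.mul_assoc, ← Matrix.mul_assoc Uᴴ U, hUU, Matrix.one_mul]
    _ = -(ρ * A).trace := by rw [hρ, hA, Matrix.mul_neg, trace_neg]

theorem trace_mul_pow_eq_zero_of_odd [IsAddTorsionFree R] {ρ A : Matrix n n R}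
    (hU : U ∈ unitaryGroup n R) (hρ : U * ρ * Uᴴ = ρ) (hA : U * A * Uᴴ = -A) {k : ℕ}
    (hk : Odd k) : (ρ * A ^ k).trace = 0 :=
  trace_mul_eq_zero_of_unitary_conj_eq_neg hU hρ <| by
    rw [unitary_mul_pow_mul_conjTranspose hU, hA, hk.neg_pow]

theorem trace_mul_perturbation_mul_perturbation {ρ U O : Matrix n n ℂ}
    (hU : U ∈ unitaryGroup n ℂ) (hUρ : U * ρ * Uᴴ = ρ) (hUO : U * O * Uᴴ = -O) (ε : ℂ) :
    (ρ * ((Real.sqrt 2 : ℂ)⁻¹ • (1 + ε • O)) * O * ((Real.sqrt 2 : ℂ)⁻¹ • (1 + ε • O))).trace =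
      ε * (ρ * (O * O)).trace := by
  have hsqrt2 : ((Real.sqrt 2 : ℂ)⁻¹) ^ 2 = 2⁻¹ := by
    rw [inv_pow, ← Complex.ofReal_pow, Real.sq_sqrt zero_le_two, Complex.ofReal_ofNat]
  have hodd₁ : (ρ * O).trace = 0 := by
    simpa using trace_mul_pow_eq_zero_of_odd hU hUρ hUO odd_one
  have hodd₃ : (ρ * O ^ 3).trace = 0 := trace_mul_pow_eq_zero_of_odd hU hUρ hUO (by decide)
  rw [trace_mul_smul_one_add_smul_mul_mul_smul_one_add_smul, hodd₁, hodd₃, hsqrt2, sq]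
  ring

end Matrix

theorem Complex.ofReal_sqrt_re_sq_of_nonneg {z : ℂ} (hz : 0 ≤ z) :
    ((Real.sqrt z.re : ℝ) : ℂ) ^ 2 = z := by
  obtain ⟨hre, him⟩ := Complex.nonneg_iff.mp hz
  rw [← Complex.ofReal_pow, Real.sq_sqrt hre]
  exact Complex.ext rfl him

theorem symmetry_breaking_order_parameter_general
    {n : Type*} [Fintype n] [DecidableEq n]
    (ρ : Matrix n n ℂ)
    (U : Matrix n n ℂ) (hU : U ∈ Matrix.unitaryGroup n ℂ)
    (hUρ : U * ρ * Uᴴ = ρ)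
    (O : Matrix n n ℂ)
    (hUO : U * O * Uᴴ = -O)
    (μ o N : ℝ)
    (hfluc : ((μ * o * N) ^ 2 : ℂ) ≤ (ρ * (O * O)).trace) :
    (ρ * ((Real.sqrt 2 : ℂ)⁻¹ •
          (1 + ((Real.sqrt ((ρ * (O * O)).trace.re) : ℂ))⁻¹ • O)) * O *
        ((Real.sqrt 2 : ℂ)⁻¹ •
          (1 + ((Real.sqrt ((ρ * (O * O)).trace.re) : ℂ))⁻¹ • O))).trace
      = (Real.sqrt ((ρ * (O * O)).trace.re) : ℂ) ∧
    (ρ * ((Real.sqrt 2 : ℂ)⁻¹ •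
          (1 - ((Real.sqrt ((ρ * (O * O)).trace.re) : ℂ))⁻¹ • O)) * O *
        ((Real.sqrt 2 : ℂ)⁻¹ •
          (1 - ((Real.sqrt ((ρ * (O * O)).trace.re) : ℂ))⁻¹ • O))).trace
      = -(Real.sqrt ((ρ * (O * O)).trace.re) : ℂ) ∧
    μ * o * N ≤ ‖
      (ρ * ((Real.sqrt 2 : ℂ)⁻¹ •
          (1 + ((Real.sqrt ((ρ * (O * O)).trace.re) : ℂ))⁻¹ • O)) * O *
        ((Real.sqrt 2 : ℂ)⁻¹ •
          (1 + ((Real.sqrt ((ρ * (O * O)).trace.re) : ℂ))⁻¹ • O))).trace‖ ∧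
    μ * o * N ≤ ‖
      (ρ * ((Real.sqrt 2 : ℂ)⁻¹ •
          (1 - ((Real.sqrt ((ρ * (O * O)).trace.re) : ℂ))⁻¹ • O)) * O *
        ((Real.sqrt 2 : ℂ)⁻¹ •
          (1 - ((Real.sqrt ((ρ * (O * O)).trace.re) : ℂ))⁻¹ • O))).trace‖ := by
  set t := (ρ * (O * O)).trace
  set s := Real.sqrt t.re
  have hfluc' : (((μ * o * N) ^ 2 : ℝ) : ℂ) ≤ t := by push_cast; exact hfluc
  have ht : 0 ≤ t := (Complex.zero_le_real.mpr (sq_nonneg _)).trans hfluc'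
  have hst : (s : ℂ)⁻¹ * t = s := by
    rw [← Complex.ofReal_sqrt_re_sq_of_nonneg ht, sq, ← mul_assoc, inv_mul_mul_self]
  have hplus := trace_mul_perturbation_mul_perturbation hU hUρ hUO (s : ℂ)⁻¹
  have hminus := trace_mul_perturbation_mul_perturbation hU hUρ hUO (-(s : ℂ)⁻¹)
  rw [hst] at hplus
  rw [neg_smul, ← sub_eq_add_neg, neg_mul, hst] at hminus
  have hbound : μ * o * N ≤ s :=
    (le_abs_self _).trans (Real.abs_le_sqrt (Complex.le_def.mp hfluc').1)
  refine ⟨hplus, hminus, ?_, ?_⟩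
  · rwa [hplus, Complex.norm_real, Real.norm_of_nonneg (Real.sqrt_nonneg _)]
  · rwa [hminus, norm_neg, Complex.norm_real, Real.norm_of_nonneg (Real.sqrt_nonneg _)]

/-- For a density matrix `ρ` invariant under a unitary `U` that flips the sign of a Hermitian
order parameter `O`, extensive fluctuations `tr(ρO²) ≥ (μoN)²` imply that the perturbed states
built from `Õ^± = (1 ± O/√tr(ρO²))/√2` give the order parameter the extensive values
`tr(ρ Õ^± O Õ^±) = ±√tr(ρO²)`, so in particular `|tr(ρ Õ^± O Õ^±)| ≥ μoN`. -/
theorem symmetry_breaking_order_parameter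
    {n : Type*} [Fintype n] [DecidableEq n] [Nonempty n]
    (ρ : Matrix n n ℂ) (hρ : ρ.PosSemidef) (hρtr : ρ.trace = 1)
    (U : Matrix n n ℂ) (hU : U ∈ Matrix.unitaryGroup n ℂ)
    (hUρ : U * ρ * Uᴴ = ρ)
    (O : Matrix n n ℂ) (hO : Oᴴ = O)
    (hUO : U * O * Uᴴ = -O)
    (μ o N : ℝ) (hμ : 0 < μ) (ho : 0 < o) (hN : 0 < N)
    (hfluc : ((μ * o * N) ^ 2 : ℂ) ≤ (ρ * (O * O)).trace) :
    (ρ * ((Real.sqrt 2 : ℂ)⁻¹ •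
          (1 + ((Real.sqrt ((ρ * (O * O)).trace.re) : ℂ))⁻¹ • O)) * O *
        ((Real.sqrt 2 : ℂ)⁻¹ •
          (1 + ((Real.sqrt ((ρ * (O * O)).trace.re) : ℂ))⁻¹ • O))).trace
      = (Real.sqrt ((ρ * (O * O)).trace.re) : ℂ) ∧
    (ρ * ((Real.sqrt 2 : ℂ)⁻¹ •
          (1 - ((Real.sqrt ((ρ * (O * O)).trace.re) : ℂ))⁻¹ • O)) * O *
        ((Real.sqrt 2 : ℂ)⁻¹ •
          (1 - ((Real.sqrt ((ρ * (O * O)).trace.re) : ℂ))⁻¹ • O))).trace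
      = -(Real.sqrt ((ρ * (O * O)).trace.re) : ℂ) ∧
    μ * o * N ≤ ‖
      (ρ * ((Real.sqrt 2 : ℂ)⁻¹ •
          (1 + ((Real.sqrt ((ρ * (O * O)).trace.re) : ℂ))⁻¹ • O)) * O *
        ((Real.sqrt 2 : ℂ)⁻¹ •
          (1 + ((Real.sqrt ((ρ * (O * O)).trace.re) : ℂ))⁻¹ • O))).trace‖ ∧
    μ * o * N ≤ ‖
      (ρ * ((Real.sqrt 2 : ℂ)⁻¹ •
          (1 - ((Real.sqrt ((ρ * (O * O)).trace.re) : ℂ))⁻¹ • O)) * O *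
        ((Real.sqrt 2 : ℂ)⁻¹ •
          (1 - ((Real.sqrt ((ρ * (O * O)).trace.re) : ℂ))⁻¹ • O))).trace‖ :=
  symmetry_breaking_order_parameter_general ρ U hU hUρ O hUO μ o N hfluc
end

section
/- Let ρ be a density matrix, U a unitary with U·ρ·U† = ρ, and O a Hermitian matrix with U·O·U† = −O. Assume tr(ρ·O²) > 0 and define Õ^± := (1 ± O/√(tr(ρ·O²)))/√2. Then Õ^± · ρ · Õ^± is again a density matrix: it is positive semidefinite and has trace 1. (Hence A ↦ tr(ρ · Õ^± · A · Õ^±) defines a state.) -/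
open Matrix
open scoped ComplexOrder

/-- The symmetry-breaking perturbation operator `Õ⁺ = (1 + O/s)/√2`. -/
noncomputable def tildeOplus {n : Type*} [Fintype n] [DecidableEq n]
    (O : Matrix n n ℂ) (s : ℝ) : Matrix n n ℂ :=
  (Real.sqrt 2 : ℂ)⁻¹ • (1 + ((s : ℂ))⁻¹ • O)

/-- The symmetry-breaking perturbation operator `Õ⁻ = (1 - O/s)/√2`. -/
noncomputable def tildeOminus {n : Type*} [Fintype n] [DecidableEq n]
    (O : Matrix n n ℂ) (s : ℝ) : Matrix n n ℂ :=
  (Real.sqrt 2 : ℂ)⁻¹ • (1 - ((s : ℂ))⁻¹ • O)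

/-- For a density matrix `ρ` invariant under a unitary `U` that flips the sign of a Hermitian
matrix `O`, if `tr(ρO²) > 0` then `Õ^± ρ Õ^±` with `Õ^± = (1 ± O/√tr(ρO²))/√2` is again a
density matrix: positive semidefinite with trace 1. -/
theorem tildeO_conj_isDensityMatrix
    {n : Type*} [Fintype n] [DecidableEq n] [Nonempty n]
    (ρ : Matrix n n ℂ) (hρ : ρ.PosSemidef) (hρtr : ρ.trace = 1)
    (U : Matrix n n ℂ) (hU : U ∈ Matrix.unitaryGroup n ℂ)
    (hUρ : U * ρ * Uᴴ = ρ)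
    (O : Matrix n n ℂ) (hO : Oᴴ = O)
    (hUO : U * O * Uᴴ = -O)
    (hfluc : (0 : ℂ) < (ρ * (O * O)).trace) :
    (tildeOplus O (Real.sqrt ((ρ * (O * O)).trace.re)) * ρ *
        tildeOplus O (Real.sqrt ((ρ * (O * O)).trace.re))).PosSemidef ∧
    (tildeOplus O (Real.sqrt ((ρ * (O * O)).trace.re)) * ρ *
        tildeOplus O (Real.sqrt ((ρ * (O * O)).trace.re))).trace = 1 ∧
    (tildeOminus O (Real.sqrt ((ρ * (O * O)).trace.re)) * ρ *
        tildeOminus O (Real.sqrt ((ρ * (O * O)).trace.re))).PosSemidef ∧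
    (tildeOminus O (Real.sqrt ((ρ * (O * O)).trace.re)) * ρ *
        tildeOminus O (Real.sqrt ((ρ * (O * O)).trace.re))).trace = 1 := by
  set s := Real.sqrt ((ρ * (O * O)).trace.re) with hs_def
  have hre : 0 < (ρ * (O * O)).trace.re := (Complex.lt_def.mp hfluc).1
  have him : (ρ * (O * O)).trace.im = 0 := ((Complex.lt_def.mp hfluc).2).symm
  have hs : 0 < s := Real.sqrt_pos.2 hre
  have hsC : (s : ℂ) ≠ 0 := by exact_mod_cast hs.ne'
  have hs2 : (s : ℂ) * (s : ℂ) = (ρ * (O * O)).trace := by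
    have h : (s : ℂ) * s = ((s * s : ℝ) : ℂ) := by push_cast; ring
    rw [h, hs_def, Real.mul_self_sqrt hre.le]
    exact Complex.ext rfl him.symm
  have h1 : Uᴴ * U = 1 := Matrix.mem_unitaryGroup_iff'.mp hU
  have hUO' : Uᴴ * O * U = -O := by
    have key : Uᴴ * (U * O * Uᴴ) * U = O := by
      rw [show Uᴴ * (U * O * Uᴴ) * U = ((Uᴴ * U) * O) * (Uᴴ * U) by noncomm_ring, h1]
      simp
    rw [hUO] at key
    rw [Matrix.mul_neg, Matrix.neg_mul] at key
    exact neg_eq_iff_eq_neg.mp key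
  have hρO : (ρ * O).trace = 0 := by
    have h3 : (ρ * O).trace = -(ρ * O).trace := by
      calc (ρ * O).trace = ((U * ρ * Uᴴ) * O).trace := by rw [hUρ]
        _ = (U * (ρ * (Uᴴ * O))).trace := by simp only [Matrix.mul_assoc]
        _ = ((ρ * (Uᴴ * O)) * U).trace := trace_mul_comm _ _
        _ = (ρ * (Uᴴ * O * U)).trace := by simp only [Matrix.mul_assoc]
        _ = -(ρ * O).trace := by rw [hUO']; simp [Matrix.mul_neg]
    linear_combination h3 / 2
  have hOρ : (O * ρ).trace = 0 := by rw [trace_mul_comm]; exact hρO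
  have hOρO : (O * (ρ * O)).trace = (s : ℂ) * s := by
    rw [hs2, trace_mul_comm, Matrix.mul_assoc]
  have h2C : ((Real.sqrt 2 : ℝ) : ℂ) * ((Real.sqrt 2 : ℝ) : ℂ) = 2 := by
    exact_mod_cast congrArg (Complex.ofReal) (Real.mul_self_sqrt (by norm_num : (0:ℝ) ≤ 2))
  have hsqrt2 : ((Real.sqrt 2 : ℝ) : ℂ) ≠ 0 := by
    intro h; rw [h] at h2C; norm_num at h2C
  have hHp : (tildeOplus O s)ᴴ = tildeOplus O s := by
    simp [tildeOplus, conjTranspose_smul, conjTranspose_add, conjTranspose_one, hO,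
      Complex.star_def, map_inv₀, Complex.conj_ofReal]
  have hHm : (tildeOminus O s)ᴴ = tildeOminus O s := by
    simp [tildeOminus, conjTranspose_smul, conjTranspose_sub, conjTranspose_one, hO,
      Complex.star_def, map_inv₀, Complex.conj_ofReal]
  have hpsd : ∀ A : Matrix n n ℂ, Aᴴ = A → (A * ρ * A).PosSemidef := by
    intro A hA
    have := hρ.mul_mul_conjTranspose_same A
    rwa [hA] at this
  have key : ∀ c : ℂ, c * c = (s : ℂ)⁻¹ * (s : ℂ)⁻¹ →
      ((((Real.sqrt 2 : ℝ) : ℂ)⁻¹ • (1 + c • O)) * ρ *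
        (((Real.sqrt 2 : ℝ) : ℂ)⁻¹ • (1 + c • O))).trace = 1 := by
    intro c hc
    simp only [Matrix.smul_mul, Matrix.mul_smul, Matrix.add_mul, Matrix.mul_add,
      Matrix.one_mul, Matrix.mul_one, Matrix.mul_assoc, trace_smul, trace_add, smul_eq_mul]
    rw [hρtr, hρO, hOρ, hOρO]
    have hcs : c * c * ((s : ℂ) * s) = 1 := by
      rw [hc]; field_simp
    field_simp
    linear_combination hcs - h2C
  have hTp : (tildeOplus O s * ρ * tildeOplus O s).trace = 1 := by
    rw [tildeOplus]; exact key _ rfl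
  have hTm : (tildeOminus O s * ρ * tildeOminus O s).trace = 1 := by
    rw [tildeOminus, sub_eq_add_neg, ← neg_smul]
    exact key _ (by ring)
  refine ⟨hpsd _ hHp, hTp, hpsd _ hHm, hTm⟩
end

section
/- Let ρ⁺, ρ⁻ be density matrices, λ > 0 a real, and O a Hermitian matrix satisfying O·ρ^± = ρ^±·O = ±λ·ρ^±. Set ρ := (ρ⁺ + ρ⁻)/2. Then tr(ρ·O²) = λ², and with Õ^± := (1 ± O/λ)/√2 one has the exact reconstruction of the symmetry-broken components: Õ^± · ρ · Õ^± = ρ^±. -/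
open Matrix
open scoped ComplexOrder

/-- If `ρ⁺`, `ρ⁻` are density matrices, `λ > 0`, and `O` is Hermitian with
`O·ρ^± = ρ^±·O = ±λ·ρ^±`, then for `ρ = (ρ⁺ + ρ⁻)/2` one has `tr(ρO²) = λ²` and the
perturbation operators `Õ^± = (1 ± O/λ)/√2` exactly reconstruct the symmetry-broken
components: `Õ^± ρ Õ^± = ρ^±`. -/
theorem tildeO_reconstructs_components
    {n : Type*} [Fintype n] [DecidableEq n] [Nonempty n]
    (ρp ρm : Matrix n n ℂ)
    (hρp : ρp.PosSemidef) (hρptr : ρp.trace = 1)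
    (hρm : ρm.PosSemidef) (hρmtr : ρm.trace = 1)
    (lam : ℝ) (hlam : 0 < lam)
    (O : Matrix n n ℂ) (hO : Oᴴ = O)
    (hOp1 : O * ρp = (lam : ℂ) • ρp) (hOp2 : ρp * O = (lam : ℂ) • ρp)
    (hOm1 : O * ρm = -((lam : ℂ) • ρm)) (hOm2 : ρm * O = -((lam : ℂ) • ρm))
    (ρ : Matrix n n ℂ) (hρ : ρ = (2 : ℂ)⁻¹ • (ρp + ρm)) :
    (ρ * (O * O)).trace = ((lam : ℝ) ^ 2 : ℂ) ∧
    tildeOplus O lam * ρ * tildeOplus O lam = ρp ∧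
    tildeOminus O lam * ρ * tildeOminus O lam = ρm := by
  have hl : (lam : ℂ) ≠ 0 := by
    exact_mod_cast (ne_of_gt hlam)
  have hs2 : (Real.sqrt 2 : ℂ) * (Real.sqrt 2 : ℂ) = 2 := by
    norm_cast
    rw [Real.mul_self_sqrt (by norm_num : (0:ℝ) ≤ 2)]
  have hc : ((Real.sqrt 2 : ℂ)⁻¹ * (Real.sqrt 2 : ℂ)⁻¹) = (2 : ℂ)⁻¹ := by
    rw [← mul_inv, hs2]
  set B : Matrix n n ℂ := 1 + ((lam : ℂ))⁻¹ • O with hB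
  set C : Matrix n n ℂ := 1 - ((lam : ℂ))⁻¹ • O with hC
  have hBρp : B * ρp = (2 : ℂ) • ρp := by
    rw [hB, add_mul, one_mul, smul_mul_assoc, hOp1, smul_smul, inv_mul_cancel₀ hl,
      one_smul, two_smul]
  have hρpB : ρp * B = (2 : ℂ) • ρp := by
    rw [hB, mul_add, mul_one, mul_smul_comm, hOp2, smul_smul, inv_mul_cancel₀ hl,
      one_smul, two_smul]
  have hBρm : B * ρm = 0 := by
    rw [hB, add_mul, one_mul, smul_mul_assoc, hOm1, smul_neg, smul_smul,
      inv_mul_cancel₀ hl, one_smul, add_neg_cancel]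
  have hCρm : C * ρm = (2 : ℂ) • ρm := by
    rw [hC, sub_mul, one_mul, smul_mul_assoc, hOm1, smul_neg, smul_smul,
      inv_mul_cancel₀ hl, one_smul, sub_neg_eq_add, two_smul]
  have hρmC : ρm * C = (2 : ℂ) • ρm := by
    rw [hC, mul_sub, mul_one, mul_smul_comm, hOm2, smul_neg, smul_smul,
      inv_mul_cancel₀ hl, one_smul, sub_neg_eq_add, two_smul]
  have hCρp : C * ρp = 0 := by
    rw [hC, sub_mul, one_mul, smul_mul_assoc, hOp1, smul_smul,
      inv_mul_cancel₀ hl, one_smul, sub_self]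
  refine ⟨?_, ?_, ?_⟩
  · have h1 : ρp * (O * O) = ((lam : ℂ) ^ 2) • ρp := by
      rw [← mul_assoc, hOp2, smul_mul_assoc, hOp2, smul_smul, sq]
    have h2 : ρm * (O * O) = ((lam : ℂ) ^ 2) • ρm := by
      rw [← mul_assoc, hOm2, neg_mul, smul_mul_assoc, hOm2, smul_neg, neg_neg,
        smul_smul, sq]
    rw [hρ, smul_mul_assoc, add_mul, h1, h2, trace_smul, trace_add, trace_smul,
      trace_smul, hρptr, hρmtr]
    simp [smul_eq_mul]
    ring
  · show ((Real.sqrt 2 : ℂ)⁻¹ • B) * ρ * ((Real.sqrt 2 : ℂ)⁻¹ • B) = ρp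
    have key1 : B * (ρp + ρm) = (2 : ℂ) • ρp := by
      rw [mul_add, hBρp, hBρm, add_zero]
    have key : B * (ρp + ρm) * B = (4 : ℂ) • ρp := by
      rw [key1, smul_mul_assoc, hρpB, smul_smul]
      norm_num
    rw [hρ]
    simp only [smul_mul_assoc, mul_smul_comm, smul_smul]
    rw [key, smul_smul]
    have : (Real.sqrt 2 : ℂ)⁻¹ * (2⁻¹ * (Real.sqrt 2 : ℂ)⁻¹) * 4 = 1 := by
      rw [show (Real.sqrt 2 : ℂ)⁻¹ * (2⁻¹ * (Real.sqrt 2 : ℂ)⁻¹) * 4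
          = ((Real.sqrt 2 : ℂ)⁻¹ * (Real.sqrt 2 : ℂ)⁻¹) * 2⁻¹ * 4 by ring, hc]
      norm_num
    rw [this, one_smul]
  · show ((Real.sqrt 2 : ℂ)⁻¹ • C) * ρ * ((Real.sqrt 2 : ℂ)⁻¹ • C) = ρm
    have key1 : C * (ρp + ρm) = (2 : ℂ) • ρm := by
      rw [mul_add, hCρp, hCρm, zero_add]
    have key : C * (ρp + ρm) * C = (4 : ℂ) • ρm := by
      rw [key1, smul_mul_assoc, hρmC, smul_smul]
      norm_num
    rw [hρ]
    simp only [smul_mul_assoc, mul_smul_comm, smul_smul]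
    rw [key, smul_smul]
    have : (Real.sqrt 2 : ℂ)⁻¹ * (2⁻¹ * (Real.sqrt 2 : ℂ)⁻¹) * 4 = 1 := by
      rw [show (Real.sqrt 2 : ℂ)⁻¹ * (2⁻¹ * (Real.sqrt 2 : ℂ)⁻¹) * 4
          = ((Real.sqrt 2 : ℂ)⁻¹ * (Real.sqrt 2 : ℂ)⁻¹) * 2⁻¹ * 4 by ring, hc]
      norm_num
    rw [this, one_smul]
end

section
/- Let L' be a linear map on matrices with L'(1) = 0 and ‖L'(X)‖ ≤ K·‖X‖ for all matrices X (K ≥ 0), and let S = Q + R be matrices with Q·R = R·Q and L'(Q·X) = Q·L'(X) for every matrix X. Then for every matrix A: ‖Γ_{L'}(S², A)‖ ≤ 3·K·‖R‖·(2·‖Q‖ + ‖R‖)·‖A‖, where Γ_{L'}(X,Y) := L'(X·Y) − L'(X)·Y − X·L'(Y). -/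
open Matrix
open scoped Matrix.Norms.L2Operator

/-- `Γ_{L'}(X,Y) = L'(XY) − L'(X)Y − X L'(Y)` measures the failure of `L'` to satisfy the
Leibniz rule. -/
noncomputable def leibnizDefect {n : Type*} [Fintype n] [DecidableEq n]
    (L' : Module.End ℂ (Matrix n n ℂ)) (X Y : Matrix n n ℂ) : Matrix n n ℂ :=
  L' (X * Y) - L' X * Y - X * L' Y

/-!
The defect is additive in its first argument, and since `L'` commutes with left multiplication
by `Q`, `Γ(QX, A) = Q·Γ(X, A)`; moreover `L'(Q) = Q·L'(1) = 0` makes `Γ(Q, A) = 0`. Expanding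
`S² = Q² + QR + RQ + R²` therefore gives `Γ(S², A) = Q·Γ(R, A) + Γ(RQ, A) + Γ(R², A)`, and each
term is bounded by the crude estimate `‖Γ(X, A)‖ ≤ 3K‖X‖‖A‖`.
-/

section

variable {n : Type*} [Fintype n] [DecidableEq n] (L' : Module.End ℂ (Matrix n n ℂ))

theorem leibnizDefect_add_left (X Y A : Matrix n n ℂ) :
    leibnizDefect L' (X + Y) A = leibnizDefect L' X A + leibnizDefect L' Y A := by
  simp only [leibnizDefect, add_mul, map_add]
  abel

theorem leibnizDefect_mul_left {Q : Matrix n n ℂ} (hQ : ∀ X, L' (Q * X) = Q * L' X)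
    (X A : Matrix n n ℂ) : leibnizDefect L' (Q * X) A = Q * leibnizDefect L' X A := by
  simp only [leibnizDefect, mul_assoc, hQ, mul_sub]

theorem leibnizDefect_eq_zero_of_mul_left {Q : Matrix n n ℂ} (hL1 : L' 1 = 0)
    (hQ : ∀ X, L' (Q * X) = Q * L' X) (A : Matrix n n ℂ) : leibnizDefect L' Q A = 0 := by
  have hLQ : L' Q = 0 := by simpa [hL1] using hQ 1
  simp [leibnizDefect, hQ, hLQ]

theorem leibnizDefect_add_mul_self {Q : Matrix n n ℂ} (hL1 : L' 1 = 0)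
    (hQ : ∀ X, L' (Q * X) = Q * L' X) (R A : Matrix n n ℂ) :
    leibnizDefect L' ((Q + R) * (Q + R)) A =
      Q * leibnizDefect L' R A + leibnizDefect L' (R * Q) A + leibnizDefect L' (R * R) A := by
  simp only [add_mul, mul_add, leibnizDefect_add_left, leibnizDefect_mul_left L' hQ,
    leibnizDefect_eq_zero_of_mul_left L' hL1 hQ, mul_zero, zero_add]
  abel

theorem norm_leibnizDefect_le {K : ℝ} (hK : 0 ≤ K) (hL : ∀ X, ‖L' X‖ ≤ K * ‖X‖)
    (X A : Matrix n n ℂ) : ‖leibnizDefect L' X A‖ ≤ 3 * K * ‖X‖ * ‖A‖ := by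
  have hXA : ‖L' (X * A)‖ ≤ K * (‖X‖ * ‖A‖) :=
    (hL _).trans (mul_le_mul_of_nonneg_left (norm_mul_le X A) hK)
  have hLX : ‖L' X * A‖ ≤ K * ‖X‖ * ‖A‖ :=
    (norm_mul_le _ _).trans (mul_le_mul_of_nonneg_right (hL X) (norm_nonneg A))
  have hLA : ‖X * L' A‖ ≤ ‖X‖ * (K * ‖A‖) :=
    (norm_mul_le _ _).trans (mul_le_mul_of_nonneg_left (hL A) (norm_nonneg X))
  calc ‖leibnizDefect L' X A‖ ≤ ‖L' (X * A)‖ + ‖L' X * A‖ + ‖X * L' A‖ :=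
        (norm_sub_le _ _).trans (add_le_add_left (norm_sub_le _ _) _)
    _ ≤ 3 * K * ‖X‖ * ‖A‖ := by linarith

end

theorem leibnizDefect_sq_norm_bound_general
    {n : Type*} [Fintype n] [DecidableEq n]
    (L' : Module.End ℂ (Matrix n n ℂ))
    (hL1 : L' 1 = 0)
    (K : ℝ) (hK : 0 ≤ K)
    (hLnorm : ∀ X : Matrix n n ℂ, ‖L' X‖ ≤ K * ‖X‖)
    (S Q R : Matrix n n ℂ)
    (hS : S = Q + R)
    (hQ : ∀ X : Matrix n n ℂ, L' (Q * X) = Q * L' X) :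
    ∀ A : Matrix n n ℂ,
      ‖leibnizDefect L' (S * S) A‖ ≤ 3 * K * ‖R‖ * (2 * ‖Q‖ + ‖R‖) * ‖A‖ := by
  intro A
  have hΓ := norm_leibnizDefect_le L' hK hLnorm
  rw [hS, leibnizDefect_add_mul_self L' hL1 hQ]
  calc _ ≤ ‖Q‖ * ‖leibnizDefect L' R A‖ + ‖leibnizDefect L' (R * Q) A‖
          + ‖leibnizDefect L' (R * R) A‖ :=
        norm_add₃_le.trans (by gcongr; exact norm_mul_le _ _)
    _ ≤ ‖Q‖ * (3 * K * ‖R‖ * ‖A‖) + 3 * K * (‖R‖ * ‖Q‖) * ‖A‖ + 3 * K * (‖R‖ * ‖R‖) * ‖A‖ := by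
        gcongr
        · exact hΓ R A
        · exact (hΓ _ A).trans (by gcongr; exact norm_mul_le R Q)
        · exact (hΓ _ A).trans (by gcongr; exact norm_mul_le R R)
    _ = 3 * K * ‖R‖ * (2 * ‖Q‖ + ‖R‖) * ‖A‖ := by ring

/-- If `L'(1) = 0`, `‖L'(X)‖ ≤ K‖X‖`, `S = Q + R` with `Q·R = R·Q` and `L'(Q·X) = Q·L'(X)`,
then `‖Γ_{L'}(S², A)‖ ≤ 3K‖R‖(2‖Q‖ + ‖R‖)‖A‖`. -/
theorem leibnizDefect_sq_norm_bound
    {n : Type*} [Fintype n] [DecidableEq n] [Nonempty n]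
    (L' : Module.End ℂ (Matrix n n ℂ))
    (hL1 : L' 1 = 0)
    (K : ℝ) (hK : 0 ≤ K)
    (hLnorm : ∀ X : Matrix n n ℂ, ‖L' X‖ ≤ K * ‖X‖)
    (S Q R : Matrix n n ℂ)
    (hS : S = Q + R)
    (hQR : Q * R = R * Q)
    (hQ : ∀ X : Matrix n n ℂ, L' (Q * X) = Q * L' X) :
    ∀ A : Matrix n n ℂ,
      ‖leibnizDefect L' (S * S) A‖ ≤ 3 * K * ‖R‖ * (2 * ‖Q‖ + ‖R‖) * ‖A‖ :=
  leibnizDefect_sq_norm_bound_general L' hL1 K hK hLnorm S Q R hS hQ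
end

section
/- Let ρ be a density matrix and C a Hermitian matrix with ρ·C = C·ρ. Let O⁺ be a matrix with [C, O⁺] = O⁺ and set O⁻ := (O⁺)†, O⁽²⁾ := (O⁺ − O⁻)/(2i). For a natural number k, set Z(k) := √(tr(ρ·(O⁻)^k·(O⁺)^k)) and assume Z(k) > 0 for all relevant k; define the functional χ^(m,m')(A) := tr(ρ·(O⁻)^{m'}·A·(O⁺)^m) / (Z(m)·Z(m')). Then for all natural numbers m, m': χ^(m,m')(O⁽²⁾) + χ^(m',m)(O⁽²⁾) = 0. In particular every real linear combination of the symmetrized functionals gives zero expectation to the order parameter O⁽²⁾. -/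
open Matrix
open scoped ComplexOrder

/-- The normalization `Z(k) = √tr(ρ·(O⁻)^k·(O⁺)^k)`, where `O⁻ = (O⁺)†`. -/
noncomputable def ktZ {n : Type*} [Fintype n] [DecidableEq n]
    (ρ Op : Matrix n n ℂ) (k : ℕ) : ℝ :=
  Real.sqrt ((ρ * Opᴴ ^ k * Op ^ k).trace.re)

/-- The Koma–Tasaki functional `χ^(m,m')(A) = tr(ρ·(O⁻)^{m'}·A·(O⁺)^m)/(Z(m)·Z(m'))`. -/
noncomputable def ktChi {n : Type*} [Fintype n] [DecidableEq n]
    (ρ Op : Matrix n n ℂ) (m m' : ℕ) (A : Matrix n n ℂ) : ℂ :=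
  (ρ * Opᴴ ^ m' * A * Op ^ m).trace / ((ktZ ρ Op m * ktZ ρ Op m' : ℝ) : ℂ)

/-! A Hermitian charge `C` with `[C, O⁺] = O⁺` grades the matrix algebra: `[C, X] = a • X` says
that `X` shifts the charge by `a`. Shifts add under products, so `(O⁻)^j (O⁺)^k` shifts it by
`k - j`, and a state commuting with `C` sees only charge-neutral operators. Hence
`tr(ρ (O⁻)^j (O⁺)^k)` vanishes for `j ≠ k` and is symmetric in `j, k`, which makes the two
terms of `χ^(m,m')(O⁽²⁾) + χ^(m',m)(O⁽²⁾)` cancel pairwise. -/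

section ChargeShift

variable {R A : Type*} [CommRing R] [Ring A] [Algebra R A]

theorem mul_sub_mul_eq_smul_mul {C X Y : A} {a b : R}
    (hX : C * X - X * C = a • X) (hY : C * Y - Y * C = b • Y) :
    C * (X * Y) - X * Y * C = (a + b) • (X * Y) := by
  have h : C * (X * Y) - X * Y * C = (C * X - X * C) * Y + X * (C * Y - Y * C) := by
    noncomm_ring
  rw [h, hX, hY, add_smul, smul_mul_assoc, mul_smul_comm]

theorem mul_pow_sub_pow_mul_eq_smul {C X : A} {a : R}
    (hX : C * X - X * C = a • X) (k : ℕ) :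
    C * X ^ k - X ^ k * C = ((k : R) * a) • X ^ k := by
  induction k with
  | zero => simp
  | succ k ih =>
    rw [pow_succ, mul_sub_mul_eq_smul_mul ih hX]
    congr 1
    push_cast
    ring

end ChargeShift

theorem mul_star_sub_star_mul_of_isSelfAdjoint {A : Type*} [Ring A] [StarRing A] {C X : A}
    (hC : IsSelfAdjoint C) (hX : C * X - X * C = X) :
    C * star X - star X * C = -star X := by
  have h := congrArg star hX
  rw [star_sub, star_mul, star_mul, hC.star_eq] at h
  rw [← neg_sub, h]

namespace Matrix

variable {n 𝕜 : Type*} [Fintype n]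

theorem trace_mul_eq_zero_of_commute_of_shift [Field 𝕜] {ρ C X : Matrix n n 𝕜} {c : 𝕜}
    (hρC : ρ * C = C * ρ) (hc : c ≠ 0) (hX : C * X - X * C = c • X) :
    (ρ * X).trace = 0 := by
  have h : (ρ * (C * X - X * C)).trace = 0 := by
    rw [Matrix.mul_sub, trace_sub, ← Matrix.mul_assoc, hρC, ← Matrix.mul_assoc,
      trace_mul_cycle ρ X C, Matrix.mul_assoc, sub_self]
  rw [hX, Matrix.mul_smul, trace_smul, smul_eq_mul] at h
  exact (mul_eq_zero.mp h).resolve_left hc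

theorem trace_mul_conjTranspose_pow_mul_pow_eq_zero [DecidableEq n] [Field 𝕜] [StarRing 𝕜] [CharZero 𝕜]
    {ρ C P : Matrix n n 𝕜} (hC : Cᴴ = C) (hρC : ρ * C = C * ρ) (hCP : C * P - P * C = P)
    {j k : ℕ} (hjk : j ≠ k) :
    (ρ * (Pᴴ ^ j * P ^ k)).trace = 0 := by
  have hP : C * P - P * C = (1 : 𝕜) • P := by rw [one_smul, hCP]
  have hQ : C * Pᴴ - Pᴴ * C = (-1 : 𝕜) • Pᴴ := by
    rw [neg_one_smul]
    exact mul_star_sub_star_mul_of_isSelfAdjoint (A := Matrix n n 𝕜) hC hCP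
  refine trace_mul_eq_zero_of_commute_of_shift hρC ?_ (mul_sub_mul_eq_smul_mul
    (mul_pow_sub_pow_mul_eq_smul hQ j) (mul_pow_sub_pow_mul_eq_smul hP k))
  rw [mul_neg_one, mul_one, neg_add_eq_sub, sub_ne_zero]
  exact_mod_cast hjk.symm

theorem trace_mul_conjTranspose_pow_mul_pow_comm [DecidableEq n] [Field 𝕜] [StarRing 𝕜]
    [CharZero 𝕜] {ρ C P : Matrix n n 𝕜} (hC : Cᴴ = C) (hρC : ρ * C = C * ρ)
    (hCP : C * P - P * C = P) (j k : ℕ) :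
    (ρ * (Pᴴ ^ j * P ^ k)).trace = (ρ * (Pᴴ ^ k * P ^ j)).trace := by
  rcases eq_or_ne j k with rfl | hjk
  · rfl
  · rw [trace_mul_conjTranspose_pow_mul_pow_eq_zero hC hρC hCP hjk,
      trace_mul_conjTranspose_pow_mul_pow_eq_zero hC hρC hCP hjk.symm]

theorem trace_mul_pow_mul_smul_sub_mul_pow [DecidableEq n] [CommRing 𝕜]
    (ρ P Q : Matrix n n 𝕜) (c : 𝕜) (j k : ℕ) :
    (ρ * Q ^ j * (c • (P - Q)) * P ^ k).trace
      = c * ((ρ * (Q ^ j * P ^ (k + 1))).trace - (ρ * (Q ^ (j + 1) * P ^ k)).trace) := by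
  rw [Matrix.mul_smul, Matrix.smul_mul, trace_smul, smul_eq_mul, Matrix.mul_sub,
    Matrix.sub_mul, trace_sub, pow_succ', pow_succ]
  simp only [Matrix.mul_assoc]

end Matrix

theorem ktChi_order_parameter_zero_general
    {n : Type*} [Fintype n] [DecidableEq n]
    (ρ : Matrix n n ℂ)
    (C : Matrix n n ℂ) (hC : Cᴴ = C)
    (hρC : ρ * C = C * ρ)
    (Op : Matrix n n ℂ)
    (hCOp : C * Op - Op * C = Op) :
    ∀ m m' : ℕ, 0 < ktZ ρ Op m → 0 < ktZ ρ Op m' →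
      ktChi ρ Op m m' ((2 * Complex.I)⁻¹ • (Op - Opᴴ))
        + ktChi ρ Op m' m ((2 * Complex.I)⁻¹ • (Op - Opᴴ)) = 0 := by
  intro m m' _ _
  have hcomm := trace_mul_conjTranspose_pow_mul_pow_comm hC hρC hCOp
  rw [ktChi, ktChi, mul_comm (ktZ ρ Op m'), ← add_div,
    trace_mul_pow_mul_smul_sub_mul_pow, trace_mul_pow_mul_smul_sub_mul_pow,
    hcomm m' (m + 1), hcomm m (m' + 1)]
  ring

/-- For a density matrix `ρ` commuting with a Hermitian charge `C` and a raising operator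
`O⁺` with `[C, O⁺] = O⁺`, the symmetrized Koma–Tasaki functionals give zero expectation
value to the order parameter `O⁽²⁾ = (O⁺ − O⁻)/(2i)`:
`χ^(m,m')(O⁽²⁾) + χ^(m',m)(O⁽²⁾) = 0`. -/
theorem ktChi_order_parameter_zero
    {n : Type*} [Fintype n] [DecidableEq n] [Nonempty n]
    (ρ : Matrix n n ℂ) (hρ : ρ.PosSemidef) (hρtr : ρ.trace = 1)
    (C : Matrix n n ℂ) (hC : Cᴴ = C)
    (hρC : ρ * C = C * ρ)
    (Op : Matrix n n ℂ)
    (hCOp : C * Op - Op * C = Op) :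
    ∀ m m' : ℕ, 0 < ktZ ρ Op m → 0 < ktZ ρ Op m' →
      ktChi ρ Op m m' ((2 * Complex.I)⁻¹ • (Op - Opᴴ))
        + ktChi ρ Op m' m ((2 * Complex.I)⁻¹ • (Op - Opᴴ)) = 0 :=
  ktChi_order_parameter_zero_general ρ C hC hρC Op hCOp
end

section
/- Let ρ be a positive semidefinite matrix. Then for all matrices A, B, C the Cauchy–Schwarz inequality for states holds: |tr(ρ · A† · B · C)| ≤ ‖B‖ · √(tr(ρ · A† · A)) · √(tr(ρ · C† · C)). -/
/-!
`X ↦ tr(ρ X)` is a positive linear functional on the C⋆-algebra of matrices, so it suffices to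
prove `|f(a⋆ b c)| ≤ ‖b‖ √f(a⋆ a) √f(c⋆ c)` for any positive functional `f` on a C⋆-algebra.
In the GNS pre-Hilbert space of `f` the left side is `|⟪a, b c⟫|`: apply Cauchy–Schwarz and the
bound `‖b c‖ ≤ ‖b‖ ‖c‖` for left multiplication, which holds because `c⋆ b⋆ b c ≤ ‖b‖² c⋆ c`.
-/

open Matrix
open scoped ComplexOrder Matrix.Norms.L2Operator

namespace PositiveLinearMap

variable {A : Type*} [NonUnitalCStarAlgebra A] [PartialOrder A] [StarOrderedRing A]

theorem norm_apply_star_mul_mul_le (f : A →ₚ[ℂ] ℂ) (a b c : A) :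
    ‖f (star a * b * c)‖ ≤ ‖b‖ * √(f (star a * a)).re * √(f (star c * c)).re := by
  have hinner :
      f (star a * b * c) = inner ℂ (f.toPreGNS a) (f.leftMulMapPreGNS b (f.toPreGNS c)) := by
    rw [preGNS_inner_def, mul_assoc]; rfl
  calc ‖f (star a * b * c)‖
      ≤ ‖f.toPreGNS a‖ * ‖f.leftMulMapPreGNS b (f.toPreGNS c)‖ :=
        hinner ▸ norm_inner_le_norm _ _
    _ ≤ ‖f.toPreGNS a‖ * (‖b‖ * ‖f.toPreGNS c‖) := by
        gcongr
        exact (f.leftMulMapPreGNS b).le_of_opNorm_le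
          (LinearMap.mkContinuous_norm_le _ (norm_nonneg b) _) _
    _ = ‖b‖ * √(f (star a * a)).re * √(f (star c * c)).re := by
        rw [preGNS_norm_def, preGNS_norm_def, ofPreGNS_toPreGNS, ofPreGNS_toPreGNS]; ring

end PositiveLinearMap

namespace Matrix

open scoped MatrixOrder

variable {n : Type*} [Fintype n]

noncomputable def PosSemidef.traceMulLeft {ρ : Matrix n n ℂ} (hρ : ρ.PosSemidef) :
    Matrix n n ℂ →ₚ[ℂ] ℂ :=
  .mk₀ (traceLinearMap n ℂ ℂ ∘ₗ LinearMap.mulLeft ℂ ρ) fun X hX => by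
    classical
    obtain ⟨D, rfl⟩ := CStarAlgebra.nonneg_iff_eq_star_mul_self.mp hX
    rw [LinearMap.comp_apply, LinearMap.mulLeft_apply, traceLinearMap_apply, star_eq_conjTranspose,
      ← Matrix.mul_assoc, trace_mul_comm]
    simpa [Matrix.mul_assoc] using (hρ.mul_mul_conjTranspose_same D).trace_nonneg

@[simp]
lemma PosSemidef.traceMulLeft_apply {ρ : Matrix n n ℂ} (hρ : ρ.PosSemidef)
    (X : Matrix n n ℂ) :
    hρ.traceMulLeft X = (ρ * X).trace := rfl

end Matrix

theorem state_cauchy_schwarz_general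
    {n : Type*} [Fintype n] [DecidableEq n]
    (ρ : Matrix n n ℂ) (hρ : ρ.PosSemidef) :
    ∀ A B C : Matrix n n ℂ,
      ‖(ρ * Aᴴ * B * C).trace‖
        ≤ ‖B‖ * Real.sqrt ((ρ * Aᴴ * A).trace.re) * Real.sqrt ((ρ * Cᴴ * C).trace.re) := by
  intro A B C
  open scoped MatrixOrder in
  simpa only [Matrix.mul_assoc, PosSemidef.traceMulLeft_apply, star_eq_conjTranspose] using
    hρ.traceMulLeft.norm_apply_star_mul_mul_le A B C

/-- Cauchy–Schwarz inequality for the state defined by a positive semidefinite matrix `ρ`: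
`|tr(ρ A† B C)| ≤ ‖B‖ √tr(ρ A† A) √tr(ρ C† C)`. -/
theorem state_cauchy_schwarz
    {n : Type*} [Fintype n] [DecidableEq n] [Nonempty n]
    (ρ : Matrix n n ℂ) (hρ : ρ.PosSemidef) :
    ∀ A B C : Matrix n n ℂ,
      ‖(ρ * Aᴴ * B * C).trace‖
        ≤ ‖B‖ * Real.sqrt ((ρ * Aᴴ * A).trace.re) * Real.sqrt ((ρ * Cᴴ * C).trace.re) :=
  state_cauchy_schwarz_general ρ hρ
end

section
/- (Koma–Tasaki lemma, first part.) Let ρ be a density matrix, O⁺ = Q + R matrices, O⁻ := (O⁺)†, and reals o > 0, 0 < μ ≤ 1, N > 0, a ≥ 1 and a natural number M. Assume: ‖O⁺‖ ≤ o·N; ‖R‖ ≤ o·a; ‖[O⁺, O⁻]‖ ≤ 4·o²·N; ‖[Q, Q†]‖ ≤ 4·o²·N; the fluctuation bound tr(ρ·(O⁺·O⁻ + O⁻·O⁺)) ≥ 4·(μ·o·N)²; N ≥ 16·a²/μ²; and M ≤ μ²·N/(16·a). Define a_m := tr(Q^m · ρ · (Q†)^m) (a nonnegative real, with a_0 = 1).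 Then for every m with 1 ≤ m ≤ M one has a_{m−1} > 0 and a_m ≥ (μ·o·N)² · a_{m−1}; consequently a_{m−k} ≤ (μ·o·N)^{−2k} · a_m for all k ≤ m ≤ M. -/
/-!
Write `ρ = B Bᴴ`; then `ψ = vec B` purifies `ρ`: `tr(X ρ Xᴴ) = ‖(1 ⊗ X) ψ‖²`, so `a_m = ‖Q^m ψ‖²`
and the lemma becomes a statement about operators on a Hilbert space, with `u = μoN`.

Along `φ_m = Q^m ψ` one propagates the lower bound `‖O⁺ φ_m‖² ≥ γ_m ‖φ_m‖²` with
`γ_m = 15/8 u² - m D`, `D = 9/2 o²N + 5 o²Na`; the fluctuation bound and the small commutator give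
`γ_0`. Since `Qφ` and `O⁺φ` differ by at most `‖R‖ ‖φ‖`, the bound at `φ_m` gives
`‖φ_{m+1}‖ ≥ u ‖φ_m‖`. Since `O⁺` is nearly normal, `‖O⁺O⁺φ‖` is close to `‖O⁺†O⁺φ‖`, which is at
least `‖O⁺φ‖²/‖φ‖` by Cauchy–Schwarz; this carries the bound over to `φ_{m+1}` at the cost of `D`.
The hypothesis on `M` keeps `γ_m ≥ (17/16)² u²` throughout.
-/

open Matrix
open scoped ComplexOrder Matrix.Norms.L2Operator

/-- `a_m = tr(Q^m · ρ · (Q†)^m)`, a nonnegative real number. -/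
noncomputable def ktA {n : Type*} [Fintype n] [DecidableEq n]
    (ρ Q : Matrix n n ℂ) (m : ℕ) : ℝ :=
  ((Q ^ m * ρ * Qᴴ ^ m).trace).re

open Kronecker

namespace Matrix

section Ampliation

variable {n R : Type*} [Fintype n] [DecidableEq n] [CommSemiring R] [StarRing R]

def ampliation : Matrix n n R →⋆ₐ[R] Matrix (n × n) (n × n) R where
  toFun X := 1 ⊗ₖ X
  map_one' := one_kronecker_one
  map_mul' X Y := by rw [← mul_kronecker_mul, Matrix.mul_one]
  map_zero' := kronecker_zero _
  map_add' := kronecker_add _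
  commutes' r := by simp only [Algebra.algebraMap_eq_smul_one, kronecker_smul, one_kronecker_one]
  map_star' X := by simp [star_eq_conjTranspose, conjTranspose_kronecker]

end Ampliation

variable {n : Type*} [Fintype n] [DecidableEq n]

noncomputable def ampliationCLM :
    Matrix n n ℂ →⋆ₐ[ℂ] (EuclideanSpace ℂ (n × n) →L[ℂ] EuclideanSpace ℂ (n × n)) :=
  (toEuclideanCLM : Matrix (n × n) (n × n) ℂ ≃⋆ₐ[ℂ] _).toStarAlgHom.comp ampliation

theorem PosSemidef.exists_purification {ρ : Matrix n n ℂ} (hρ : ρ.PosSemidef) :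
    ∃ ψ : EuclideanSpace ℂ (n × n), ∀ X : Matrix n n ℂ,
      ‖ampliationCLM X ψ‖ ^ 2 = (X * ρ * Xᴴ).trace.re := by
  obtain ⟨B, rfl⟩ : ∃ B : Matrix n n ℂ, ρ = B * star B := by
    open scoped MatrixOrder in exact CStarAlgebra.nonneg_iff_eq_mul_star_self.mp hρ.nonneg
  refine ⟨WithLp.toLp 2 (vec B), fun X => ?_⟩
  have hX : ampliationCLM X (WithLp.toLp 2 (vec B)) = WithLp.toLp 2 (vec (X * B)) := by
    simp [ampliationCLM, ampliation, vec_mul_eq_mulVec]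
  rw [hX, ← inner_self_eq_norm_sq (𝕜 := ℂ), EuclideanSpace.inner_eq_star_dotProduct,
    dotProduct_comm, star_vec_dotProduct_vec, trace_mul_comm, conjTranspose_mul,
    star_eq_conjTranspose]
  simp only [Matrix.mul_assoc, RCLike.re_to_complex]

end Matrix

namespace ContinuousLinearMap

variable {E : Type*} [NormedAddCommGroup E] [InnerProductSpace ℂ E] [CompleteSpace E]

theorem norm_star_apply_sq_le (A : E →L[ℂ] E) (x : E) :
    ‖star A x‖ ^ 2 ≤ ‖A x‖ ^ 2 + ‖A * star A - star A * A‖ * ‖x‖ ^ 2 := by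
  have hdiff : ‖star A x‖ ^ 2 - ‖A x‖ ^ 2 =
      RCLike.re (inner ℂ x ((A * star A - star A * A) x)) := by
    rw [apply_norm_sq_eq_inner_adjoint_right, apply_norm_sq_eq_inner_adjoint_right]
    simp [star_eq_adjoint]
  have hbound := (re_inner_le_norm (𝕜 := ℂ) x ((A * star A - star A * A) x)).trans
    (mul_le_mul_of_nonneg_left ((A * star A - star A * A).le_opNorm x) (norm_nonneg x))
  linarith

theorem norm_apply_sq_le_norm_mul_norm_star_mul_self_apply (A : E →L[ℂ] E) (x : E) :
    ‖A x‖ ^ 2 ≤ ‖x‖ * ‖(star A * A) x‖ := by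
  rw [apply_norm_sq_eq_inner_adjoint_right, ← star_eq_adjoint]
  exact re_inner_le_norm _ _

-- `‖A†Ax‖ ≥ ‖Ax‖² / ‖x‖` by Cauchy–Schwarz, and near-normality lets `A` replace `A†`.
theorem sq_norm_apply_sub_le_norm_mul_norm_apply_apply (A : E →L[ℂ] E) (x : E) {κ : ℝ}
    (hcomm : ‖A * star A - star A * A‖ ≤ 4 * κ) (hsmall : 81 * κ * ‖x‖ ^ 2 ≤ 8 * ‖A x‖ ^ 2) :
    ‖A x‖ ^ 2 - 9 / 4 * κ * ‖x‖ ^ 2 ≤ ‖x‖ * ‖A (A x)‖ := by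
  have hκ : 0 ≤ κ := by linarith [norm_nonneg (A * star A - star A * A)]
  have hCS := norm_apply_sq_le_norm_mul_norm_star_mul_self_apply A x
  have hswap : ‖(star A * A) x‖ ^ 2 ≤ ‖A (A x)‖ ^ 2 + 4 * κ * ‖A x‖ ^ 2 :=
    (norm_star_apply_sq_le A (A x)).trans (by gcongr)
  refine le_of_sq_le_sq ?_ (by positivity)
  have : ‖A x‖ ^ 4 ≤ ‖x‖ ^ 2 * (‖A (A x)‖ ^ 2 + 4 * κ * ‖A x‖ ^ 2) := by
    calc ‖A x‖ ^ 4 = (‖A x‖ ^ 2) ^ 2 := by ring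
      _ ≤ (‖x‖ * ‖(star A * A) x‖) ^ 2 := by gcongr
      _ ≤ _ := by rw [mul_pow]; gcongr
  nlinarith [mul_nonneg hκ (sq_nonneg ‖x‖)]

end ContinuousLinearMap

-- With `c = 9/4 κ + Lβ` the constant is `9/2 κ + 5Lβ = 2c + 3Lβ`: the extra `3Lβ` absorbs the
-- cross terms of `(P + βt)²`, which are at most `33/16 Lβ t²`.
theorem koma_tasaki_quartic {t P β L κ : ℝ} (ht : 0 ≤ t) (hβ : 0 ≤ β) (hκ : 0 ≤ κ) (hP : 0 ≤ P)
    (hβP : β * P ≤ L * β * t) (hβ2 : 16 * β ^ 2 ≤ L * β) :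
    (P ^ 2 - (9 / 2 * κ + 5 * (L * β)) * t ^ 2) * (P + β * t) ^ 2 ≤
      (P ^ 2 - (9 / 4 * κ + L * β) * t ^ 2) ^ 2 := by
  have hLβ : 0 ≤ L * β := by nlinarith
  have hcross : 2 * β * t * P + β ^ 2 * t ^ 2 ≤ 33 / 16 * (L * β) * t ^ 2 := by
    nlinarith [mul_le_mul_of_nonneg_left hβP ht, mul_le_mul_of_nonneg_right hβ2 (sq_nonneg t)]
  have hcross0 : 0 ≤ 2 * β * t * P + β ^ 2 * t ^ 2 := by positivity
  nlinarith [mul_le_mul_of_nonneg_left hcross (sq_nonneg P),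
    mul_nonneg (mul_nonneg (by positivity : 0 ≤ (9 / 2 * κ + 5 * (L * β))) (sq_nonneg t)) hcross0,
    mul_nonneg hLβ (mul_nonneg (sq_nonneg t) (sq_nonneg P)),
    sq_nonneg ((9 / 4 * κ + L * β) * t ^ 2)]

theorem koma_tasaki_parameters {o μ N a : ℝ} {M : ℕ} (ho : 0 < o) (hμ0 : 0 < μ) (hμ1 : μ ≤ 1)
    (ha : 1 ≤ a) (hNa : 16 * a ^ 2 / μ ^ 2 ≤ N) (hM : (M : ℝ) ≤ μ ^ 2 * N / (16 * a)) :
    0 < μ * o * N ∧ 16 * (o ^ 2 * N) ≤ (μ * o * N) ^ 2 ∧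
      16 * (o * N * (o * a)) ≤ (μ * o * N) ^ 2 ∧ 16 * (o * a) ≤ μ * o * N ∧
      16 * (o * a) ≤ o * N ∧
      M * (9 / 2 * (o ^ 2 * N) + 5 * (o * N * (o * a))) ≤ 5 / 8 * (μ * o * N) ^ 2 := by
  rw [div_le_iff₀ (by positivity)] at hNa
  rw [le_div_iff₀ (by positivity)] at hM
  have hN : 0 < N := by nlinarith
  have h16a : 16 * a ≤ μ ^ 2 * N := by nlinarith
  have hμN : μ ^ 2 * N ≤ μ * N := by nlinarith
  have hμN' : μ * N ≤ N := by nlinarith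
  have ho2N : 0 < o ^ 2 * N := by positivity
  refine ⟨by positivity, by nlinarith, by nlinarith, by nlinarith, by nlinarith, ?_⟩
  have hM0 : (0 : ℝ) ≤ M := M.cast_nonneg
  nlinarith [mul_le_mul_of_nonneg_right hM ho2N.le, mul_nonneg hM0 ho2N.le]

theorem le_inv_pow_mul_of_forall_mul_le {a : ℕ → ℝ} {c : ℝ} {M : ℕ} (hc : 0 < c)
    (h : ∀ m, 1 ≤ m → m ≤ M → c * a (m - 1) ≤ a m) {k m : ℕ} (hkm : k ≤ m) (hm : m ≤ M) :
    a (m - k) ≤ (c ^ k)⁻¹ * a m := by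
  rw [le_inv_mul_iff₀ (pow_pos hc k)]
  induction k with
  | zero => simp
  | succ k ih =>
    calc c ^ (k + 1) * a (m - (k + 1)) = c ^ k * (c * a (m - k - 1)) := by
          rw [pow_succ, Nat.sub_add_eq]; ring
      _ ≤ c ^ k * a (m - k) := by gcongr; exact h _ (by omega) (by omega)
      _ ≤ a m := ih (by omega)

section KomaTasaki

open ContinuousLinearMap

variable {E : Type*} [NormedAddCommGroup E] [InnerProductSpace ℂ E] [CompleteSpace E]

variable {A Q R : E →L[ℂ] E} {u κ L β : ℝ}

theorem koma_tasaki_step (hA : A = Q + R) (hAL : ‖A‖ ≤ L) (hRβ : ‖R‖ ≤ β)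
    (hcomm : ‖A * star A - star A * A‖ ≤ 4 * κ) (hκ : 16 * κ ≤ u ^ 2)
    (hLβ : 16 * (L * β) ≤ u ^ 2) (hβ : 16 * β ≤ u) (hβL : 16 * β ≤ L)
    {γ : ℝ} (hγ : 289 / 256 * u ^ 2 ≤ γ) {x : E} (hx : 0 < ‖x‖)
    (hAx : γ * ‖x‖ ^ 2 ≤ ‖A x‖ ^ 2) :
    u ^ 2 * ‖x‖ ^ 2 ≤ ‖Q x‖ ^ 2 ∧
      (γ - (9 / 2 * κ + 5 * (L * β))) * ‖Q x‖ ^ 2 ≤ ‖A (Q x)‖ ^ 2 := by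
  have hβ0 : 0 ≤ β := (norm_nonneg R).trans hRβ
  have hκ0 : 0 ≤ κ := by linarith [norm_nonneg (A * star A - star A * A)]
  have hu : 0 ≤ u := by linarith
  have hQ : Q = A - R := by rw [hA, add_sub_cancel_right]
  have hRx : ‖R x‖ ≤ β * ‖x‖ := R.le_of_opNorm_le hRβ x
  have hQx_ge : ‖A x‖ - β * ‖x‖ ≤ ‖Q x‖ := by
    rw [hQ, _root_.sub_apply]; linarith [norm_sub_norm_le (A x) (R x)]
  have hQx_le : ‖Q x‖ ≤ ‖A x‖ + β * ‖x‖ := by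
    rw [hQ, _root_.sub_apply]; linarith [norm_sub_le (A x) (R x)]
  have hAQx : ‖A (A x)‖ - L * β * ‖x‖ ≤ ‖A (Q x)‖ := by
    have : ‖A (R x)‖ ≤ L * (β * ‖x‖) :=
      (A.le_of_opNorm_le hAL _).trans (mul_le_mul_of_nonneg_left hRx (by linarith))
    rw [hQ, _root_.sub_apply, map_sub]; linarith [norm_sub_norm_le (A (A x)) (A (R x))]
  have hAL' : ‖A x‖ ≤ L * ‖x‖ := A.le_of_opNorm_le hAL x
  have hAx' : 17 / 16 * u * ‖x‖ ≤ ‖A x‖ := le_of_sq_le_sq (by nlinarith) (norm_nonneg _)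
  have hswap := sq_norm_apply_sub_le_norm_mul_norm_apply_apply A x hcomm (by nlinarith)
  have hQx : u * ‖x‖ ≤ ‖Q x‖ := by nlinarith
  refine ⟨by simpa [mul_pow] using pow_le_pow_left₀ (mul_nonneg hu hx.le) hQx 2, ?_⟩
  have hAQx' : ‖A x‖ ^ 2 - (9 / 4 * κ + L * β) * ‖x‖ ^ 2 ≤ ‖x‖ * ‖A (Q x)‖ := by
    nlinarith [mul_le_mul_of_nonneg_left hAQx hx.le]
  have hDP : (9 / 2 * κ + 5 * (L * β)) * ‖x‖ ^ 2 ≤ ‖A x‖ ^ 2 := by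
    nlinarith [mul_le_mul_of_nonneg_right hκ (sq_nonneg ‖x‖),
      mul_le_mul_of_nonneg_right hLβ (sq_nonneg ‖x‖)]
  have hβP : β * ‖A x‖ ≤ L * β * ‖x‖ := by nlinarith
  have hβ2 : 16 * β ^ 2 ≤ L * β := by nlinarith
  refine le_of_mul_le_mul_left ?_ (by positivity : 0 < ‖x‖ ^ 2)
  calc ‖x‖ ^ 2 * ((γ - (9 / 2 * κ + 5 * (L * β))) * ‖Q x‖ ^ 2)
      ≤ (‖A x‖ ^ 2 - (9 / 2 * κ + 5 * (L * β)) * ‖x‖ ^ 2) * ‖Q x‖ ^ 2 := by nlinarith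
    _ ≤ (‖A x‖ ^ 2 - (9 / 2 * κ + 5 * (L * β)) * ‖x‖ ^ 2) * (‖A x‖ + β * ‖x‖) ^ 2 := by
      gcongr
    _ ≤ (‖A x‖ ^ 2 - (9 / 4 * κ + L * β) * ‖x‖ ^ 2) ^ 2 :=
      koma_tasaki_quartic hx.le hβ0 hκ0 (norm_nonneg _) hβP hβ2
    _ ≤ (‖x‖ * ‖A (Q x)‖) ^ 2 := by gcongr; nlinarith
    _ = ‖x‖ ^ 2 * ‖A (Q x)‖ ^ 2 := by ring

theorem koma_tasaki_growth (hA : A = Q + R) (hAL : ‖A‖ ≤ L) (hRβ : ‖R‖ ≤ β)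
    (hcomm : ‖A * star A - star A * A‖ ≤ 4 * κ) (hu : 0 < u) (hκ : 16 * κ ≤ u ^ 2)
    (hLβ : 16 * (L * β) ≤ u ^ 2) (hβ : 16 * β ≤ u) (hβL : 16 * β ≤ L) {M : ℕ}
    (hM : M * (9 / 2 * κ + 5 * (L * β)) ≤ 5 / 8 * u ^ 2) {ψ : E} (hψ : ‖ψ‖ = 1)
    (hfluc : 4 * u ^ 2 ≤ ‖A ψ‖ ^ 2 + ‖star A ψ‖ ^ 2) (m : ℕ) (hm : m < M) :
    0 < ‖(Q ^ m) ψ‖ ∧ u ^ 2 * ‖(Q ^ m) ψ‖ ^ 2 ≤ ‖(Q ^ (m + 1)) ψ‖ ^ 2 := by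
  have hκ0 : 0 ≤ κ := by linarith [norm_nonneg (A * star A - star A * A)]
  have hLβ0 : 0 ≤ L * β := mul_nonneg (by linarith [norm_nonneg A]) ((norm_nonneg R).trans hRβ)
  have hγ (m : ℕ) (hm : m < M) :
      289 / 256 * u ^ 2 ≤ 15 / 8 * u ^ 2 - m * (9 / 2 * κ + 5 * (L * β)) := by
    have : (m : ℝ) * (9 / 2 * κ + 5 * (L * β)) ≤ M * (9 / 2 * κ + 5 * (L * β)) := by
      gcongr
    linarith
  have hinv (m : ℕ) (hm : m ≤ M) : 0 < ‖(Q ^ m) ψ‖ ∧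
      (15 / 8 * u ^ 2 - m * (9 / 2 * κ + 5 * (L * β))) * ‖(Q ^ m) ψ‖ ^ 2 ≤
        ‖A ((Q ^ m) ψ)‖ ^ 2 := by
    induction m with
    | zero =>
      have hswap := norm_star_apply_sq_le A ψ
      simp only [pow_zero, one_apply_eq_self, hψ, CharP.cast_eq_zero, zero_mul, sub_zero, one_pow,
        mul_one] at hswap ⊢
      exact ⟨one_pos, by linarith⟩
    | succ m ih =>
      obtain ⟨hpos, hinv⟩ := ih (by omega)
      obtain ⟨hQ, hAQ⟩ := koma_tasaki_step hA hAL hRβ hcomm hκ hLβ hβ hβL (hγ m hm) hpos hinv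
      rw [pow_succ' Q m, mul_apply_eq_comp, Nat.cast_succ]
      refine ⟨?_, by linarith⟩
      nlinarith [norm_nonneg (Q ((Q ^ m) ψ)), mul_pos (pow_pos hu 2) (pow_pos hpos 2)]
  obtain ⟨hpos, hinvm⟩ := hinv m hm.le
  rw [pow_succ' Q m, mul_apply_eq_comp]
  exact ⟨hpos, (koma_tasaki_step hA hAL hRβ hcomm hκ hLβ hβ hβL (hγ m hm) hpos hinvm).1⟩

end KomaTasaki

theorem koma_tasaki_lemma_first_part_general
    {n : Type*} [Fintype n] [DecidableEq n]
    (ρ : Matrix n n ℂ) (hρ : ρ.PosSemidef) (hρtr : ρ.trace = 1)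
    (Op Q R : Matrix n n ℂ) (hOp : Op = Q + R)
    (o μ N a : ℝ) (M : ℕ)
    (ho : 0 < o) (hμ0 : 0 < μ) (hμ1 : μ ≤ 1) (ha : 1 ≤ a)
    (hOpn : ‖Op‖ ≤ o * N)
    (hRn : ‖R‖ ≤ o * a)
    (hcommOp : ‖Op * Opᴴ - Opᴴ * Op‖ ≤ 4 * o ^ 2 * N)
    (hfluc : 4 * (μ * o * N) ^ 2 ≤ ((ρ * (Op * Opᴴ + Opᴴ * Op)).trace).re)
    (hNa : 16 * a ^ 2 / μ ^ 2 ≤ N)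
    (hM : (M : ℝ) ≤ μ ^ 2 * N / (16 * a)) :
    (∀ m : ℕ, 1 ≤ m → m ≤ M →
        0 < ktA ρ Q (m - 1) ∧ (μ * o * N) ^ 2 * ktA ρ Q (m - 1) ≤ ktA ρ Q m) ∧
    (∀ k m : ℕ, k ≤ m → m ≤ M →
        ktA ρ Q (m - k) ≤ ((μ * o * N) ^ (2 * k))⁻¹ * ktA ρ Q m) := by
  obtain ⟨ψ, hψ⟩ := hρ.exists_purification
  set π := ampliationCLM (n := n)
  have hkt (m : ℕ) : ktA ρ Q m = ‖(π Q ^ m) ψ‖ ^ 2 := by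
    rw [← map_pow, hψ, conjTranspose_pow]; rfl
  have hψ1 : ‖ψ‖ = 1 := by
    have := hψ 1
    simp only [map_one, one_apply_eq_self, Matrix.one_mul, conjTranspose_one, Matrix.mul_one, hρtr,
      Complex.one_re] at this
    rwa [pow_eq_one_iff_of_nonneg (norm_nonneg ψ) two_ne_zero] at this
  have hfluc' : 4 * (μ * o * N) ^ 2 ≤ ‖π Op ψ‖ ^ 2 + ‖star (π Op) ψ‖ ^ 2 := by
    have htr : (Op * ρ * Opᴴ).trace + (Opᴴ * ρ * Op).trace =
        (ρ * (Op * Opᴴ + Opᴴ * Op)).trace := by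
      rw [trace_mul_cycle, trace_mul_comm, trace_mul_cycle Opᴴ, trace_mul_comm (Op * Opᴴ),
        ← trace_add, ← Matrix.mul_add, add_comm]
    rwa [← map_star, hψ, hψ, star_eq_conjTranspose, conjTranspose_conjTranspose,
      ← Complex.add_re, htr]
  obtain ⟨hu, hκ, hLβ, hβ, hβL, hMD⟩ := koma_tasaki_parameters ho hμ0 hμ1 ha hNa hM
  have hcomm : ‖π Op * star (π Op) - star (π Op) * π Op‖ ≤ 4 * (o ^ 2 * N) := by
    rw [← map_star, ← map_mul, ← map_mul, ← map_sub, ← mul_assoc]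
    exact (NonUnitalStarAlgHom.norm_apply_le π _).trans hcommOp
  have part1 (m : ℕ) (h1 : 1 ≤ m) (hm : m ≤ M) :
      0 < ktA ρ Q (m - 1) ∧ (μ * o * N) ^ 2 * ktA ρ Q (m - 1) ≤ ktA ρ Q m := by
    obtain ⟨k, rfl⟩ := Nat.exists_eq_add_of_le' h1
    obtain ⟨hpos, hgrow⟩ := koma_tasaki_growth (by rw [hOp, map_add])
      ((NonUnitalStarAlgHom.norm_apply_le π Op).trans hOpn)
      ((NonUnitalStarAlgHom.norm_apply_le π R).trans hRn) hcomm hu hκ hLβ hβ hβL hMD hψ1 hfluc' k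
      (by omega)
    rw [Nat.add_sub_cancel, hkt, hkt]
    exact ⟨by positivity, hgrow⟩
  refine ⟨part1, fun k m hkm hm => ?_⟩
  rw [pow_mul]
  exact le_inv_pow_mul_of_forall_mul_le (by positivity) (fun m h1 hm => (part1 m h1 hm).2) hkm hm

/-- Koma–Tasaki lemma, first part: under extensive fluctuations of a raising order
parameter `O⁺ = Q + R`, the quantities `a_m = tr(Q^m ρ (Q†)^m)` satisfy
`a_{m-1} > 0` and `a_m ≥ (μoN)² a_{m-1}` for `1 ≤ m ≤ M`, hence
`a_{m-k} ≤ (μoN)^{-2k} a_m` for all `k ≤ m ≤ M`. -/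
theorem koma_tasaki_lemma_first_part
    {n : Type*} [Fintype n] [DecidableEq n] [Nonempty n]
    (ρ : Matrix n n ℂ) (hρ : ρ.PosSemidef) (hρtr : ρ.trace = 1)
    (Op Q R : Matrix n n ℂ) (hOp : Op = Q + R)
    (o μ N a : ℝ) (M : ℕ)
    (ho : 0 < o) (hμ0 : 0 < μ) (hμ1 : μ ≤ 1) (hN : 0 < N) (ha : 1 ≤ a)
    (hOpn : ‖Op‖ ≤ o * N)
    (hRn : ‖R‖ ≤ o * a)
    (hcommOp : ‖Op * Opᴴ - Opᴴ * Op‖ ≤ 4 * o ^ 2 * N)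
    (hcommQ : ‖Q * Qᴴ - Qᴴ * Q‖ ≤ 4 * o ^ 2 * N)
    (hfluc : 4 * (μ * o * N) ^ 2 ≤ ((ρ * (Op * Opᴴ + Opᴴ * Op)).trace).re)
    (hNa : 16 * a ^ 2 / μ ^ 2 ≤ N)
    (hM : (M : ℝ) ≤ μ ^ 2 * N / (16 * a)) :
    (∀ m : ℕ, 1 ≤ m → m ≤ M →
        0 < ktA ρ Q (m - 1) ∧ (μ * o * N) ^ 2 * ktA ρ Q (m - 1) ≤ ktA ρ Q m) ∧
    (∀ k m : ℕ, k ≤ m → m ≤ M →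
        ktA ρ Q (m - k) ≤ ((μ * o * N) ^ (2 * k))⁻¹ * ktA ρ Q m) :=
  koma_tasaki_lemma_first_part_general ρ hρ hρtr Op Q R hOp o μ N a M ho hμ0 hμ1 ha hOpn hRn hcommOp
    hfluc hNa hM
end

section
/- (Koma–Tasaki lemma, second part: ratio bound.) Let ρ be a density matrix, O⁺ = Q + R matrices with Q·R = R·Q, O⁻ := (O⁺)†, and reals o > 0, 0 < μ ≤ 1, N > 0, a ≥ 1 and a natural number M ≥ 1. Assume: ‖O⁺‖ ≤ o·N; ‖R‖ ≤ o·a; ‖[O⁺, O⁻]‖ ≤ 4·o²·N; ‖[Q, Q†]‖ ≤ 4·o²·N; tr(ρ·(O⁺·O⁻ + O⁻·O⁺)) ≥ 4·(μ·o·N)²; N ≥ 16·a²/μ²; and M ≤ μ²·N/(16·a). Then, with a_M := tr(Q^M · ρ · (Q†)^M), the real number tr((O⁺)^M · ρ · (O⁻)^M) satisfies tr((O⁺)^M · ρ · (O⁻)^M) ≥ (2 − exp(μ/8)) · a_M > 0. -/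
/-!
Work in the GNS space of `ρ`, where `X ↦ X ρ^{1/2}` has `‖X‖_ρ² = tr(X ρ X†)` and left
multiplication by `B` has norm at most `‖B‖`. For `a_m = ‖Q^m‖_ρ²`, Cauchy–Schwarz and
`‖[Q, Q†]‖ ≤ c` give `a_{m+1}² ≤ a_m (a_{m+2} + c a_{m+1})`, while the fluctuation hypothesis
makes `a_1` large; induction then yields `a_{m+1} ≥ (μoN)² a_m` for `m < M`. In the binomial
expansion of `(Q + R)^M` the term `R^k Q^{M-k}` therefore has `ρ`-norm at most
`binom(M,k) (a/(μN))^k ‖Q^M‖_ρ`, so `‖(O⁺)^M‖_ρ ≥ (2 - e^{μ/16}) ‖Q^M‖_ρ`; squaring gives the claim.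
-/

open Matrix
open scoped ComplexOrder Matrix.Norms.L2Operator

open scoped MatrixOrder

lemma two_sub_sq_mul_sq_le {y u v : ℝ} (hy : y ≤ 2) (hu : 0 ≤ u) (h : (2 - y) * u ≤ v) :
    (2 - y ^ 2) * u ^ 2 ≤ v ^ 2 := by
  have h0 : 0 ≤ (2 - y) * u := mul_nonneg (by linarith) hu
  nlinarith [pow_le_pow_left₀ h0 h 2, sq_nonneg ((y - 1) * u)]

namespace Real

lemma one_add_pow_le_exp {x : ℝ} (hx : -1 ≤ x) (M : ℕ) : (1 + x) ^ M ≤ exp (M * x) := by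
  rw [exp_nat_mul]
  exact pow_le_pow_left₀ (by linarith) (by linarith [add_one_le_exp x]) M

lemma exp_lt_two {x : ℝ} (hx : x ≤ 1 / 8) : exp x < 2 := by
  calc exp x < exp (log 2) := by gcongr; linarith [log_two_gt_d9]
    _ = 2 := exp_log two_pos

end Real

lemma two_sub_exp_mul_sq_le {μ y u v : ℝ} (hμ1 : μ ≤ 1) (hy0 : 0 ≤ y)
    (hy : y ≤ Real.exp (μ / 16)) (hu : 0 ≤ u) (h : (2 - y) * u ≤ v) :
    (2 - Real.exp (μ / 8)) * u ^ 2 ≤ v ^ 2 :=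
  calc (2 - Real.exp (μ / 8)) * u ^ 2 ≤ (2 - y ^ 2) * u ^ 2 := by
        rw [show μ / 8 = (2 : ℕ) * (μ / 16) by push_cast; ring, Real.exp_nat_mul]
        gcongr
    _ ≤ v ^ 2 := two_sub_sq_mul_sq_le (hy.trans (Real.exp_lt_two (by linarith)).le) hu h

lemma one_add_div_pow_le_exp {μ N a : ℝ} {M : ℕ} (hμ0 : 0 < μ) (hN : 0 < N) (ha : 0 < a)
    (hM : (M : ℝ) ≤ μ ^ 2 * N / (16 * a)) : (1 + a / (μ * N)) ^ M ≤ Real.exp (μ / 16) := by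
  refine (Real.one_add_pow_le_exp (by linarith [show 0 ≤ a / (μ * N) by positivity]) M).trans ?_
  rw [le_div_iff₀ (by positivity)] at hM
  gcongr
  rw [mul_div_assoc', div_le_div_iff₀ (by positivity) (by norm_num)]
  nlinarith

lemma two_mul_norm_sub_sum_norm_le_norm_sum {ι E : Type*} [SeminormedAddCommGroup E]
    {s : Finset ι} {i : ι} (hi : i ∈ s) (f : ι → E) :
    2 * ‖f i‖ - ∑ j ∈ s, ‖f j‖ ≤ ‖∑ j ∈ s, f j‖ := by
  classical
  rw [← Finset.add_sum_erase s _ hi, ← Finset.add_sum_erase s _ hi]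
  have h := norm_sub_le (f i + ∑ j ∈ s.erase i, f j) (∑ j ∈ s.erase i, f j)
  rw [add_sub_cancel_right] at h
  linarith [norm_sum_le (s.erase i) f]

lemma pow_mul_le_of_forall_mul_le_succ {u : ℕ → ℝ} {s : ℝ} {M : ℕ} (hs : 0 ≤ s)
    (h : ∀ m < M, s * u m ≤ u (m + 1)) {j k : ℕ} (hjk : j + k ≤ M) :
    s ^ k * u j ≤ u (j + k) := by
  induction k with
  | zero => simp
  | succ k ih =>
    calc s ^ (k + 1) * u j = s * (s ^ k * u j) := by ring
      _ ≤ s * u (j + k) := by gcongr; exact ih (by omega)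
      _ ≤ u (j + (k + 1)) := h _ (by omega)

lemma mul_le_succ_of_sq_le_mul {b : ℕ → ℝ} {c : ℝ} (hc : 0 ≤ c)
    (hb0 : b 0 = 1) (hrec : ∀ m, b (m + 1) ^ 2 ≤ b m * (b (m + 2) + c * b (m + 1))) :
    ∀ m : ℕ, m * c < b 1 → 0 < b m ∧ (b 1 - m * c) * b m ≤ b (m + 1)
  | 0, _ => by simp [hb0]
  | m + 1, hm => by
    push_cast at hm
    obtain ⟨hpos, hstep⟩ := mul_le_succ_of_sq_le_mul hc hb0 hrec m (by nlinarith)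
    have hpos' : 0 < b (m + 1) := lt_of_lt_of_le (by nlinarith) hstep
    refine ⟨hpos', ?_⟩
    have h : b m * ((b 1 - (m + 1 : ℕ) * c) * b (m + 1)) ≤ b m * b (m + 2) := by
      push_cast; nlinarith [hrec m]
    exact le_of_mul_le_mul_left h hpos

/-- The left side collects the commutator and cross-term losses in the lower bound for `‖Q‖_ρ²`
and twice the `M - 1` commutator losses of the recursion. -/
lemma ratio_bound_losses_le {o μ N a : ℝ} {M : ℕ} (hμ0 : 0 < μ) (hμ1 : μ ≤ 1) (ha : 1 ≤ a)
    (hNa : 16 * a ^ 2 / μ ^ 2 ≤ N) (hM : (M : ℝ) ≤ μ ^ 2 * N / (16 * a)) :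
    4 * o ^ 2 * N + 4 * (o * N + o * a) * (o * a) + 2 * (o * a) ^ 2 +
      2 * (M - 1) * (4 * o ^ 2 * N) ≤ 2 * (μ * o * N) ^ 2 := by
  rw [div_le_iff₀ (by positivity)] at hNa
  rw [le_div_iff₀ (by positivity)] at hM
  have hμ2 : μ ^ 2 ≤ 1 := pow_le_one₀ hμ0.le hμ1
  have hN : 1 ≤ N := by nlinarith
  have hN0 : 0 ≤ N := by linarith
  have haN : 4 * a * N ≤ μ ^ 2 * N ^ 2 / 4 := by
    nlinarith [mul_le_mul_of_nonneg_right hNa hN0,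
      mul_le_mul_of_nonneg_right (by nlinarith : a ≤ a ^ 2) hN0]
  have ha2 : 6 * a ^ 2 ≤ μ ^ 2 * N ^ 2 / 2 := by
    nlinarith [mul_le_mul_of_nonneg_right hNa hN0]
  have hMN : 8 * M * N ≤ μ ^ 2 * N ^ 2 / 2 := by
    nlinarith [mul_le_mul_of_nonneg_right hM hN0, (Nat.cast_nonneg M : (0 : ℝ) ≤ M)]
  calc _ = o ^ 2 * (4 * N + 4 * (N + a) * a + 2 * a ^ 2 + 8 * (M - 1) * N) := by ring
    _ ≤ o ^ 2 * (2 * (μ * N) ^ 2) := by gcongr; nlinarith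
    _ = 2 * (μ * o * N) ^ 2 := by ring

namespace Matrix

variable {n : Type*} [Fintype n] [DecidableEq n]

/-- The GNS vector of `X` for the state `ρ`, realised as the Hilbert–Schmidt vector `X ρ^{1/2}`. -/
noncomputable def gnsVector (ρ : Matrix n n ℂ) : Matrix n n ℂ →ₗ[ℂ] EuclideanSpace ℂ (n × n) where
  toFun X := WithLp.toLp 2 fun p => (X * CFC.sqrt ρ) p.1 p.2
  map_add' X Y := by ext; simp [Matrix.add_mul]
  map_smul' c X := by ext; simp

variable {ρ : Matrix n n ℂ}

lemma norm_gnsVector_sq_eq_sum_col (X : Matrix n n ℂ) :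
    ‖gnsVector ρ X‖ ^ 2 =
      ∑ j, ‖(EuclideanSpace.equiv n ℂ).symm fun i => (X * CFC.sqrt ρ) i j‖ ^ 2 := by
  simp only [EuclideanSpace.norm_sq_eq, Fintype.sum_prod_type]
  rw [Finset.sum_comm]
  rfl

lemma norm_gnsVector_mul_le (B X : Matrix n n ℂ) :
    ‖gnsVector ρ (B * X)‖ ≤ ‖B‖ * ‖gnsVector ρ X‖ := by
  refine le_of_sq_le_sq ?_ (by positivity)
  rw [mul_pow, norm_gnsVector_sq_eq_sum_col, norm_gnsVector_sq_eq_sum_col, Finset.mul_sum]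
  gcongr with j
  rw [← mul_pow, Matrix.mul_assoc]
  gcongr
  exact l2_opNorm_mulVec B ((EuclideanSpace.equiv n ℂ).symm fun i => (X * CFC.sqrt ρ) i j)

lemma norm_gnsVector_pow_mul_le (B X : Matrix n n ℂ) (k : ℕ) :
    ‖gnsVector ρ (B ^ k * X)‖ ≤ ‖B‖ ^ k * ‖gnsVector ρ X‖ := by
  induction k with
  | zero => simp
  | succ k ih =>
    calc ‖gnsVector ρ (B ^ (k + 1) * X)‖ ≤ ‖B‖ * ‖gnsVector ρ (B ^ k * X)‖ := by
          rw [pow_succ', Matrix.mul_assoc]; exact norm_gnsVector_mul_le _ _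
      _ ≤ ‖B‖ ^ (k + 1) * ‖gnsVector ρ X‖ := by
          rw [pow_succ', mul_assoc]; gcongr

section PosSemidef

variable (hρ : ρ.PosSemidef)
include hρ

lemma inner_gnsVector (X Y : Matrix n n ℂ) :
    inner ℂ (gnsVector ρ X) (gnsVector ρ Y) = (Xᴴ * Y * ρ).trace := by
  have hS : (CFC.sqrt ρ)ᴴ = CFC.sqrt ρ := (CFC.sqrt_nonneg ρ).isSelfAdjoint
  calc inner ℂ (gnsVector ρ X) (gnsVector ρ Y)
      = ((X * CFC.sqrt ρ)ᴴ * (Y * CFC.sqrt ρ)).trace := by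
        simp only [gnsVector, LinearMap.coe_mk, AddHom.coe_mk, PiLp.inner_apply,
          RCLike.inner_apply', Matrix.trace, Matrix.diag, Matrix.mul_apply,
          Matrix.conjTranspose_apply, starRingEnd_apply]
        rw [Fintype.sum_prod_type, Finset.sum_comm]
    _ = (Xᴴ * Y * (CFC.sqrt ρ * CFC.sqrt ρ)).trace := by
        rw [conjTranspose_mul, hS, Matrix.mul_assoc, trace_mul_comm]
        simp only [Matrix.mul_assoc]
    _ = (Xᴴ * Y * ρ).trace := by rw [CFC.sqrt_mul_sqrt_self ρ hρ.nonneg]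

lemma norm_gnsVector_sq (X : Matrix n n ℂ) :
    ‖gnsVector ρ X‖ ^ 2 = (X * ρ * Xᴴ).trace.re := by
  rw [← inner_self_eq_norm_sq (𝕜 := ℂ), inner_gnsVector hρ, ← trace_mul_cycle]
  rfl

lemma re_trace_mul_add_eq_norm_gnsVector_sq_add (X : Matrix n n ℂ) :
    (ρ * (X * Xᴴ + Xᴴ * X)).trace.re = ‖gnsVector ρ X‖ ^ 2 + ‖gnsVector ρ Xᴴ‖ ^ 2 := by
  rw [norm_gnsVector_sq hρ, norm_gnsVector_sq hρ, conjTranspose_conjTranspose, ← Complex.add_re,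
    ← trace_add, mul_add, trace_add, trace_add, trace_mul_cycle X ρ, trace_mul_cycle Xᴴ ρ,
    trace_mul_comm (Xᴴ * X), trace_mul_comm (X * Xᴴ), add_comm]

lemma norm_gnsVector_one (hρtr : ρ.trace = 1) : ‖gnsVector ρ 1‖ = 1 := by
  rw [← pow_eq_one_iff_of_nonneg (norm_nonneg _) two_ne_zero, norm_gnsVector_sq hρ]
  simp [hρtr]

lemma norm_gnsVector_le (hρtr : ρ.trace = 1) (X : Matrix n n ℂ) : ‖gnsVector ρ X‖ ≤ ‖X‖ := by
  simpa [norm_gnsVector_one hρ hρtr] using norm_gnsVector_mul_le (ρ := ρ) X 1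

lemma inner_gnsVector_mul_left (A X Y : Matrix n n ℂ) :
    inner ℂ (gnsVector ρ (A * X)) (gnsVector ρ Y) =
      inner ℂ (gnsVector ρ X) (gnsVector ρ (Aᴴ * Y)) := by
  simp only [inner_gnsVector hρ, conjTranspose_mul, Matrix.mul_assoc]

lemma norm_gnsVector_conjTranspose_mul_sq_le (A X : Matrix n n ℂ) :
    ‖gnsVector ρ (Aᴴ * X)‖ ^ 2 ≤
      ‖gnsVector ρ (A * X)‖ ^ 2 + ‖A * Aᴴ - Aᴴ * A‖ * ‖gnsVector ρ X‖ ^ 2 := by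
  have hsplit : ‖gnsVector ρ (Aᴴ * X)‖ ^ 2 = ‖gnsVector ρ (A * X)‖ ^ 2 +
      (inner ℂ (gnsVector ρ X) (gnsVector ρ ((A * Aᴴ - Aᴴ * A) * X))).re := by
    simp only [← inner_self_eq_norm_sq (𝕜 := ℂ), inner_gnsVector hρ, RCLike.re_to_complex,
      ← Complex.add_re, ← trace_add]
    congr 2
    simp only [conjTranspose_mul, conjTranspose_conjTranspose]
    noncomm_ring
  calc ‖gnsVector ρ (Aᴴ * X)‖ ^ 2
      ≤ ‖gnsVector ρ (A * X)‖ ^ 2 +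
          ‖gnsVector ρ X‖ * ‖gnsVector ρ ((A * Aᴴ - Aᴴ * A) * X)‖ := by
        rw [hsplit]; gcongr; exact re_inner_le_norm (𝕜 := ℂ) _ _
    _ ≤ ‖gnsVector ρ (A * X)‖ ^ 2 + ‖A * Aᴴ - Aᴴ * A‖ * ‖gnsVector ρ X‖ ^ 2 := by
        nlinarith [norm_gnsVector_mul_le (ρ := ρ) (A * Aᴴ - Aᴴ * A) X,
          norm_nonneg (gnsVector ρ X)]

lemma norm_gnsVector_pow_succ_sq_sq_le (A : Matrix n n ℂ) (m : ℕ) :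
    (‖gnsVector ρ (A ^ (m + 1))‖ ^ 2) ^ 2 ≤ ‖gnsVector ρ (A ^ m)‖ ^ 2 *
      (‖gnsVector ρ (A ^ (m + 2))‖ ^ 2 +
        ‖A * Aᴴ - Aᴴ * A‖ * ‖gnsVector ρ (A ^ (m + 1))‖ ^ 2) := by
  have hcs : ‖gnsVector ρ (A ^ (m + 1))‖ ^ 2 ≤
      ‖gnsVector ρ (A ^ m)‖ * ‖gnsVector ρ (Aᴴ * A ^ (m + 1))‖ := by
    rw [← inner_self_eq_norm_sq (𝕜 := ℂ), pow_succ' A m, inner_gnsVector_mul_left hρ,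
      ← pow_succ']
    exact re_inner_le_norm (𝕜 := ℂ) _ _
  have hcomm := norm_gnsVector_conjTranspose_mul_sq_le hρ A (A ^ (m + 1))
  rw [← pow_succ'] at hcomm
  calc (‖gnsVector ρ (A ^ (m + 1))‖ ^ 2) ^ 2
      ≤ ‖gnsVector ρ (A ^ m)‖ ^ 2 * ‖gnsVector ρ (Aᴴ * A ^ (m + 1))‖ ^ 2 := by
        rw [← mul_pow]; gcongr
    _ ≤ _ := by gcongr

lemma norm_gnsVector_add_sq_add_norm_sq_le (hρtr : ρ.trace = 1) {Q R : Matrix n n ℂ}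
    {q r c : ℝ} (hQ : ‖Q‖ ≤ q) (hR : ‖R‖ ≤ r) (hc : ‖Q * Qᴴ - Qᴴ * Q‖ ≤ c) :
    ‖gnsVector ρ (Q + R)‖ ^ 2 + ‖gnsVector ρ (Q + R)ᴴ‖ ^ 2 ≤
      2 * ‖gnsVector ρ Q‖ ^ 2 + c + 4 * q * r + 2 * r ^ 2 := by
  have hle := norm_gnsVector_le hρ hρtr
  have hr : ‖gnsVector ρ R‖ ≤ r := (hle R).trans hR
  have hr' : ‖gnsVector ρ Rᴴ‖ ≤ r := (hle Rᴴ).trans (by rwa [l2_opNorm_conjTranspose])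
  have hq : ‖gnsVector ρ Q‖ ≤ q := (hle Q).trans hQ
  have hq' : ‖gnsVector ρ Qᴴ‖ ≤ q := (hle Qᴴ).trans (by rwa [l2_opNorm_conjTranspose])
  have hcomm : ‖gnsVector ρ Qᴴ‖ ^ 2 ≤ ‖gnsVector ρ Q‖ ^ 2 + c := by
    have h := norm_gnsVector_conjTranspose_mul_sq_le hρ Q 1
    simp only [norm_gnsVector_one hρ hρtr, one_pow, mul_one] at h
    linarith
  have hO : ‖gnsVector ρ (Q + R)‖ ≤ ‖gnsVector ρ Q‖ + r := by
    rw [map_add]; exact (norm_add_le _ _).trans (by gcongr)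
  have hO' : ‖gnsVector ρ (Q + R)ᴴ‖ ≤ ‖gnsVector ρ Qᴴ‖ + r := by
    rw [conjTranspose_add, map_add]; exact (norm_add_le _ _).trans (by gcongr)
  have hr0 : 0 ≤ r := (norm_nonneg _).trans hr
  nlinarith [norm_nonneg (gnsVector ρ (Q + R)), norm_nonneg (gnsVector ρ (Q + R)ᴴ),
    norm_nonneg (gnsVector ρ Q), norm_nonneg (gnsVector ρ Qᴴ)]

lemma mul_norm_gnsVector_pow_le_succ (hρtr : ρ.trace = 1) {Q : Matrix n n ℂ} {c s : ℝ}
    {M : ℕ} (hc : ‖Q * Qᴴ - Qᴴ * Q‖ ≤ c) (hs : 0 < s)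
    (hbase : s ^ 2 + (M - 1) * c ≤ ‖gnsVector ρ Q‖ ^ 2) (m : ℕ) (hm : m < M) :
    s * ‖gnsVector ρ (Q ^ m)‖ ≤ ‖gnsVector ρ (Q ^ (m + 1))‖ := by
  have hc0 : 0 ≤ c := (norm_nonneg _).trans hc
  have hmM : (m : ℝ) ≤ M - 1 := by
    have : (m : ℝ) + 1 ≤ M := by exact_mod_cast hm
    linarith
  have hmc : (m : ℝ) * c ≤ (M - 1) * c := by gcongr
  have hgrowth := mul_le_succ_of_sq_le_mul (b := fun m => ‖gnsVector ρ (Q ^ m)‖ ^ 2) hc0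
    (by simp [norm_gnsVector_one hρ hρtr])
    (fun m => (norm_gnsVector_pow_succ_sq_sq_le hρ Q m).trans (by gcongr)) m
    (by rw [pow_one]; nlinarith)
  rw [pow_one] at hgrowth
  have hsq : (s * ‖gnsVector ρ (Q ^ m)‖) ^ 2 ≤ ‖gnsVector ρ (Q ^ (m + 1))‖ ^ 2 := by
    rw [mul_pow]
    exact (mul_le_mul_of_nonneg_right (by nlinarith) (sq_nonneg _)).trans hgrowth.2
  exact (pow_le_pow_iff_left₀ (by positivity) (norm_nonneg _) two_ne_zero).mp hsq

lemma pow_le_norm_gnsVector_pow (hρtr : ρ.trace = 1) {Q : Matrix n n ℂ} {s : ℝ} {M : ℕ}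
    (hs : 0 ≤ s) (hratio : ∀ m < M, s * ‖gnsVector ρ (Q ^ m)‖ ≤ ‖gnsVector ρ (Q ^ (m + 1))‖) :
    s ^ M ≤ ‖gnsVector ρ (Q ^ M)‖ := by
  have h := pow_mul_le_of_forall_mul_le_succ hs hratio (j := 0) (k := M) (zero_add M).le
  rwa [pow_zero, norm_gnsVector_one hρ hρtr, zero_add, mul_one] at h

end PosSemidef

lemma two_sub_mul_norm_gnsVector_pow_le {Q R : Matrix n n ℂ} (hRQ : Commute R Q) {x s : ℝ}
    {M : ℕ} (hx : 0 ≤ x) (hs : 0 ≤ s) (hR : ‖R‖ ≤ x * s)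
    (hratio : ∀ m < M, s * ‖gnsVector ρ (Q ^ m)‖ ≤ ‖gnsVector ρ (Q ^ (m + 1))‖) :
    (2 - (1 + x) ^ M) * ‖gnsVector ρ (Q ^ M)‖ ≤ ‖gnsVector ρ ((R + Q) ^ M)‖ := by
  set T : ℕ → EuclideanSpace ℂ (n × n) :=
    fun k => M.choose k • gnsVector ρ (R ^ k * Q ^ (M - k))
  have hsum : gnsVector ρ ((R + Q) ^ M) = ∑ k ∈ Finset.range (M + 1), T k := by
    simp only [hRQ.add_pow, map_sum, T, ← map_nsmul, nsmul_eq_mul']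
  have hterm (k : ℕ) (hk : k ∈ Finset.range (M + 1)) :
      ‖T k‖ ≤ M.choose k * x ^ k * ‖gnsVector ρ (Q ^ M)‖ := by
    have hkM : M - k + k = M := Nat.sub_add_cancel (by simpa [Nat.lt_succ_iff] using hk)
    have hdesc := pow_mul_le_of_forall_mul_le_succ hs hratio hkM.le
    rw [hkM] at hdesc
    have hRk : ‖R‖ ^ k ≤ x ^ k * s ^ k := by rw [← mul_pow]; gcongr
    calc ‖T k‖ ≤ M.choose k * (‖R‖ ^ k * ‖gnsVector ρ (Q ^ (M - k))‖) :=
          norm_nsmul_le.trans (by gcongr; exact norm_gnsVector_pow_mul_le _ _ _)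
      _ ≤ M.choose k * (x ^ k * s ^ k * ‖gnsVector ρ (Q ^ (M - k))‖) := by gcongr
      _ = M.choose k * x ^ k * (s ^ k * ‖gnsVector ρ (Q ^ (M - k))‖) := by ring
      _ ≤ M.choose k * x ^ k * ‖gnsVector ρ (Q ^ M)‖ := by gcongr
  have hbinom : ∑ k ∈ Finset.range (M + 1), (M.choose k : ℝ) * x ^ k = (1 + x) ^ M := by
    rw [add_comm 1 x, add_pow]; simp [mul_comm]
  calc (2 - (1 + x) ^ M) * ‖gnsVector ρ (Q ^ M)‖
      = 2 * ‖T 0‖ -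
          ∑ k ∈ Finset.range (M + 1), M.choose k * x ^ k * ‖gnsVector ρ (Q ^ M)‖ := by
        simp [T, ← Finset.sum_mul, hbinom]; ring
    _ ≤ 2 * ‖T 0‖ - ∑ k ∈ Finset.range (M + 1), ‖T k‖ := by
        gcongr with k hk; exact hterm k hk
    _ ≤ ‖gnsVector ρ ((R + Q) ^ M)‖ := by
        rw [hsum]; exact two_mul_norm_sub_sum_norm_le_norm_sum (by simp) T

end Matrix

theorem koma_tasaki_lemma_ratio_bound_general
    {n : Type*} [Fintype n] [DecidableEq n]
    (ρ : Matrix n n ℂ) (hρ : ρ.PosSemidef) (hρtr : ρ.trace = 1)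
    (Op Q R : Matrix n n ℂ) (hOp : Op = Q + R) (hQR : Q * R = R * Q)
    (o μ N a : ℝ) (M : ℕ)
    (ho : 0 < o) (hμ0 : 0 < μ) (hμ1 : μ ≤ 1) (hN : 0 < N) (ha : 1 ≤ a)
    (hOpn : ‖Op‖ ≤ o * N)
    (hRn : ‖R‖ ≤ o * a)
    (hcommQ : ‖Q * Qᴴ - Qᴴ * Q‖ ≤ 4 * o ^ 2 * N)
    (hfluc : 4 * (μ * o * N) ^ 2 ≤ ((ρ * (Op * Opᴴ + Opᴴ * Op)).trace).re)
    (hNa : 16 * a ^ 2 / μ ^ 2 ≤ N)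
    (hM : (M : ℝ) ≤ μ ^ 2 * N / (16 * a)) :
    0 < (2 - Real.exp (μ / 8)) * ktA ρ Q M ∧
    (2 - Real.exp (μ / 8)) * ktA ρ Q M ≤ ((Op ^ M * ρ * Opᴴ ^ M).trace).re := by
  set s := μ * o * N
  have hs : 0 < s := by positivity
  have hQ : ‖Q‖ ≤ o * N + o * a := by
    rw [show Q = Op - R by rw [hOp]; abel]
    exact (norm_sub_le _ _).trans (by gcongr)
  have hbase : s ^ 2 + (M - 1) * (4 * o ^ 2 * N) ≤ ‖gnsVector ρ Q‖ ^ 2 := by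
    have hfl := norm_gnsVector_add_sq_add_norm_sq_le hρ hρtr hQ hRn hcommQ
    rw [← hOp, ← re_trace_mul_add_eq_norm_gnsVector_sq_add hρ] at hfl
    linarith [ratio_bound_losses_le (o := o) hμ0 hμ1 ha hNa hM]
  have hratio := mul_norm_gnsVector_pow_le_succ hρ hρtr hcommQ hs hbase
  have hpert := two_sub_mul_norm_gnsVector_pow_le (ρ := ρ) (hQR.symm : Commute R Q)
    (by positivity : 0 ≤ a / (μ * N)) hs.le
    (by rwa [show a / (μ * N) * s = o * a by simp only [s]; field_simp]) hratio
  rw [add_comm R Q, ← hOp] at hpert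
  rw [ktA, ← conjTranspose_pow, ← norm_gnsVector_sq hρ, ← conjTranspose_pow,
    ← norm_gnsVector_sq hρ]
  exact ⟨mul_pos (sub_pos.2 (Real.exp_lt_two (by linarith))) (pow_pos ((pow_pos hs M).trans_le
      (pow_le_norm_gnsVector_pow hρ hρtr hs.le hratio)) 2),
    two_sub_exp_mul_sq_le hμ1 (by positivity) (one_add_div_pow_le_exp hμ0 hN (by linarith) hM)
      (norm_nonneg _) hpert⟩

/-- Koma–Tasaki lemma, second part (ratio bound): under extensive fluctuations of a raising
order parameter `O⁺ = Q + R`, one has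
`tr((O⁺)^M ρ (O⁻)^M) ≥ (2 − exp(μ/8)) · a_M > 0`, where `a_M = tr(Q^M ρ (Q†)^M)`. -/
theorem koma_tasaki_lemma_ratio_bound
    {n : Type*} [Fintype n] [DecidableEq n] [Nonempty n]
    (ρ : Matrix n n ℂ) (hρ : ρ.PosSemidef) (hρtr : ρ.trace = 1)
    (Op Q R : Matrix n n ℂ) (hOp : Op = Q + R) (hQR : Q * R = R * Q)
    (o μ N a : ℝ) (M : ℕ)
    (ho : 0 < o) (hμ0 : 0 < μ) (hμ1 : μ ≤ 1) (hN : 0 < N) (ha : 1 ≤ a) (hM1 : 1 ≤ M)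
    (hOpn : ‖Op‖ ≤ o * N)
    (hRn : ‖R‖ ≤ o * a)
    (hcommOp : ‖Op * Opᴴ - Opᴴ * Op‖ ≤ 4 * o ^ 2 * N)
    (hcommQ : ‖Q * Qᴴ - Qᴴ * Q‖ ≤ 4 * o ^ 2 * N)
    (hfluc : 4 * (μ * o * N) ^ 2 ≤ ((ρ * (Op * Opᴴ + Opᴴ * Op)).trace).re)
    (hNa : 16 * a ^ 2 / μ ^ 2 ≤ N)
    (hM : (M : ℝ) ≤ μ ^ 2 * N / (16 * a)) :
    0 < (2 - Real.exp (μ / 8)) * ktA ρ Q M ∧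
    (2 - Real.exp (μ / 8)) * ktA ρ Q M ≤ ((Op ^ M * ρ * Opᴴ ^ M).trace).re :=
  koma_tasaki_lemma_ratio_bound_general ρ hρ hρtr Op Q R hOp hQR o μ N a M ho hμ0 hμ1 hN ha hOpn hRn
    hcommQ hfluc hNa hM
end
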